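/- arXiv:1510.00495 — 5 statements merged into one kernel-verified Lean document; each statement's English description precedes it below -/
import Mathlib

section
/- Let α < 1. Then the set {x ∈ Σ : liminf_{n→∞} (log R_n(x))/(log n) ≤ α} has Hausdorff dimension zero. -/
open Filter Set Metric
open scoped ENNReal Topology

namespace RecurrenceZeroOne

/-- The first return time of `x` to its initial `n`-cylinder:
`R_n(x) = inf {j ≥ 1 : x_{j+1} ⋯ x_{j+n} = x_1 ⋯ x_n}`, equal to `⊤` if no such `j` exists. -/
noncomputable def R (m n : ℕ) (x : ℕ → Fin m) : ℕ∞ :=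
  sInf {j : ℕ∞ | ∃ k : ℕ, j = (k : ℕ∞) ∧ 1 ≤ k ∧ ∀ i < n, x (k + i) = x i}

/-- `log` of an extended natural number, valued in `ℝ≥0∞`. -/
noncomputable def elog (a : ℕ∞) : ℝ≥0∞ :=
  if a = ⊤ then ⊤ else ENNReal.ofReal (Real.log a.toNat)

/-- The ratio `log R_n(x) / φ(n)` as an element of `ℝ≥0∞`. -/
noncomputable def ratio (m : ℕ) (φ : ℕ → ℝ) (x : ℕ → Fin m) (n : ℕ) : ℝ≥0∞ :=
  elog (R m n x) / ENNReal.ofReal (φ n)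

open Classical in
/-- The standard distance `d(x,y) = m^{-inf{k ≥ 0 : x_k ≠ y_k}}` on the full shift. -/
noncomputable def shiftDist (m : ℕ) (x y : ℕ → Fin m) : ℝ :=
  if x = y then 0 else (m : ℝ) ^ (-(PiNat.firstDiff x y : ℤ))

/-- The full shift with the metric `d(x,y) = m^{-inf{k ≥ 0 : x_k ≠ y_k}}`. -/
noncomputable instance shiftMetric (m : ℕ) [hm : Fact (2 ≤ m)] :
    MetricSpace (ℕ → Fin m) where
  dist := shiftDist m
  dist_self x := if_pos rfl
  dist_comm x y := by
    show shiftDist m x y = shiftDist m y x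
    unfold shiftDist
    rcases eq_or_ne x y with rfl | h
    · simp
    · rw [if_neg h, if_neg (Ne.symm h), PiNat.firstDiff_comm]
  dist_triangle x y z := by
    show shiftDist m x z ≤ shiftDist m x y + shiftDist m y z
    unfold shiftDist
    have hm1 : (1 : ℝ) ≤ (m : ℝ) := by
      have := hm.out; exact_mod_cast le_trans (by norm_num) this
    have hpos : ∀ k : ℕ, (0 : ℝ) < (m : ℝ) ^ (-(k : ℤ)) := fun k =>
      zpow_pos (lt_of_lt_of_le one_pos hm1) _
    have hanti : ∀ a b : ℕ, a ≤ b → (m : ℝ) ^ (-(b : ℤ)) ≤ (m : ℝ) ^ (-(a : ℤ)) := by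
      intro a b hab
      exact zpow_le_zpow_right₀ hm1 (by exact_mod_cast neg_le_neg (by exact_mod_cast hab))
    rcases eq_or_ne x z with rfl | hxz
    · rw [if_pos rfl]
      positivity
    rcases eq_or_ne x y with rfl | hxy
    · rw [if_pos rfl, zero_add]
    rcases eq_or_ne y z with rfl | hyz
    · rw [if_pos rfl, add_zero]
    rw [if_neg hxz, if_neg hxy, if_neg hyz]
    have hmin := PiNat.min_firstDiff_le x y z hxz
    rcases le_total (PiNat.firstDiff x y) (PiNat.firstDiff y z) with h | h
    · have : PiNat.firstDiff x y ≤ PiNat.firstDiff x z := by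
        simpa [min_eq_left h] using hmin
      calc (m : ℝ) ^ (-(PiNat.firstDiff x z : ℤ))
          ≤ (m : ℝ) ^ (-(PiNat.firstDiff x y : ℤ)) := hanti _ _ this
        _ ≤ _ := le_add_of_nonneg_right (hpos _).le
    · have : PiNat.firstDiff y z ≤ PiNat.firstDiff x z := by
        simpa [min_eq_right h] using hmin
      calc (m : ℝ) ^ (-(PiNat.firstDiff x z : ℤ))
          ≤ (m : ℝ) ^ (-(PiNat.firstDiff y z : ℤ)) := hanti _ _ this
        _ ≤ _ := le_add_of_nonneg_left (hpos _).le
  eq_of_dist_eq_zero := by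
    intro x y h
    by_contra hxy
    have h2 : shiftDist m x y = 0 := h
    unfold shiftDist at h2
    rw [if_neg hxy] at h2
    have hm1 : (0 : ℝ) < (m : ℝ) := by
      have := (Fact.out : 2 ≤ m); positivity
    exact absurd h2 (ne_of_gt (zpow_pos hm1 _))

/-- The set `E^φ_{α,β}`. -/
noncomputable def ESet (m : ℕ) (φ : ℕ → ℝ) (α β : ℝ≥0∞) : Set (ℕ → Fin m) :=
  {x | Filter.liminf (fun n => ratio m φ x n) Filter.atTop = α ∧
       Filter.limsup (fun n => ratio m φ x n) Filter.atTop = β}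

/-- The Cantor-type set `A({n_i},{ℓ_i})`. -/
def ASet (m : ℕ) (nseq ℓseq : ℕ → ℕ) : Set (ℕ → Fin m) :=
  {x | ∀ᶠ n in Filter.atTop, ∀ i, nseq i < n → n ≤ nseq (i + 1) →
        R m n x = (ℓseq (i + 1) : ℕ∞)}

/-- The shift map `σ`. -/
def shift (m : ℕ) (x : ℕ → Fin m) : ℕ → Fin m := fun i => x (i + 1)

/-! If `liminf log R_n(x) / log n < a < 1`, then for infinitely many `n` the word `x_1 ⋯ x_n`
has a period `k ≤ n ^ a`, so it is determined by `k` and `x_1 ⋯ x_k`. The set is therefore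
covered, for infinitely many `n`, by at most `n ^ a m ^ (n ^ a)` sets of diameter `m ^ (-n)`.
For every `d > 0` the series `∑ₙ m ^ (2 n ^ a - d n)` converges, and a Hausdorff–Cantelli
argument gives `μH[d] = 0`, hence dimension zero. -/

open MeasureTheory
open scoped NNReal

section HausdorffCantelli

variable {X : Type*} [EMetricSpace X]

theorem hausdorffMeasure_limsup_eq_zero [MeasurableSpace X] [BorelSpace X] {ι : ℕ → Type*}
    [∀ n, Countable (ι n)] {t : ∀ n, ι n → Set X} {d : ℝ} (hd : 0 < d)
    (hsum : ∑' n, ∑' i, ediam (t n i) ^ d ≠ ∞) :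
    μH[d] (limsup (fun n => ⋃ i, t n i) atTop) = 0 := by
  set tail : ℕ → ℝ≥0∞ := fun N => ∑' n, ∑' i, ediam (t (n + N) i) ^ d
  have htail : Tendsto tail atTop (𝓝 0) :=
    ENNReal.tendsto_sum_nat_add (fun n => ∑' i, ediam (t n i) ^ d) hsum
  -- `tail N` controls both the mesh and the `d`-sum of the cover by the `t n i` with `n ≥ N`.
  have hdiam : ∀ N (p : Σ n, ι (n + N)), ediam (t (p.1 + N) p.2) ≤ tail N ^ d⁻¹ := by
    rintro N ⟨n, i⟩
    rw [ENNReal.le_rpow_inv_iff hd]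
    exact (ENNReal.le_tsum i).trans
      (ENNReal.le_tsum (f := fun n => ∑' i, ediam (t (n + N) i) ^ d) n)
  have hscale : Tendsto (fun N => tail N ^ d⁻¹) atTop (𝓝 0) := by
    simpa only [Function.comp_def, ENNReal.zero_rpow_of_pos (inv_pos.2 hd)] using
      ((ENNReal.continuous_rpow_const (y := d⁻¹)).tendsto 0).comp htail
  have hcover : ∀ N,
      limsup (fun n => ⋃ i, t n i) atTop ⊆ ⋃ p : Σ n, ι (n + N), t (p.1 + N) p.2 := by
    intro N x hx
    obtain ⟨n, hNn, hxn⟩ := (mem_limsup_iff_frequently_mem.1 hx).forall_exists_of_atTop N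
    obtain ⟨k, rfl⟩ : ∃ k, n = k + N := ⟨n - N, by omega⟩
    obtain ⟨i, hi⟩ := mem_iUnion.1 hxn
    exact mem_iUnion.2 ⟨⟨k, i⟩, hi⟩
  refine le_antisymm ?_ zero_le
  calc μH[d] (limsup (fun n => ⋃ i, t n i) atTop)
      ≤ liminf (fun N => ∑' p : Σ n, ι (n + N), ediam (t (p.1 + N) p.2) ^ d) atTop :=
        Measure.hausdorffMeasure_le_liminf_tsum d _ _ hscale _ (.of_forall hdiam)
          (.of_forall hcover)
    _ = 0 := by simpa only [ENNReal.tsum_sigma'] using htail.liminf_eq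

theorem dimH_limsup_le_of_tsum_ne_top {ι : ℕ → Type*} [∀ n, Countable (ι n)]
    {t : ∀ n, ι n → Set X} {d : ℝ≥0} (hd : 0 < d) (hsum : ∑' n, ∑' i, ediam (t n i) ^ (d : ℝ) ≠ ∞) :
    dimH (limsup (fun n => ⋃ i, t n i) atTop) ≤ d := by
  borelize X
  exact dimH_le_of_hausdorffMeasure_ne_top <|
    (hausdorffMeasure_limsup_eq_zero (NNReal.coe_pos.2 hd) hsum).trans_ne ENNReal.zero_ne_top

end HausdorffCantelli

theorem summable_rpow_mul_rpow_sub_mul {b : ℝ} (hb : 1 < b) (c : ℝ) {a d : ℝ} (ha : a < 1)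
    (hd : 0 < d) : Summable fun n : ℕ => b ^ (c * (n : ℝ) ^ a - d * n) := by
  have hsmall : ∀ᶠ n : ℕ in atTop, c * (n : ℝ) ^ a ≤ d / 2 * n := by
    have hlim : Tendsto (fun n : ℕ => c * (n : ℝ) ^ (a - 1)) atTop (𝓝 0) := by
      simpa [neg_sub] using ((tendsto_rpow_neg_atTop (by linarith : 0 < 1 - a)).comp
        tendsto_natCast_atTop_atTop).const_mul c
    filter_upwards [hlim.eventually (ge_mem_nhds (half_pos hd)), eventually_gt_atTop 0]
      with n hn hn0
    have hpos : (0 : ℝ) < n := by exact_mod_cast hn0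
    calc c * (n : ℝ) ^ a = c * (n : ℝ) ^ (a - 1) * n := by
          rw [mul_assoc, ← Real.rpow_add_one hpos.ne', sub_add_cancel]
      _ ≤ d / 2 * n := mul_le_mul_of_nonneg_right hn hpos.le
  have hρ : b ^ (-(d / 2)) < 1 := Real.rpow_lt_one_of_one_lt_of_neg hb (by linarith)
  refine (summable_geometric_of_lt_one (by positivity) hρ).of_norm_bounded_eventually_nat ?_
  filter_upwards [hsmall] with n hn
  rw [Real.norm_of_nonneg (by positivity), ← Real.rpow_natCast, ← Real.rpow_mul (by linarith)]
  exact Real.rpow_le_rpow_of_exponent_le hb.le (by linarith)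

theorem eq_of_forall_lt_add_of_period {α : Type*} {x y : ℕ → α} {k n : ℕ} (hk : 0 < k)
    (hx : ∀ i < n, x (k + i) = x i) (hy : ∀ i < n, y (k + i) = y i)
    (hxy : ∀ i < k, x i = y i) : ∀ i < k + n, x i = y i := by
  intro i
  induction i using Nat.strong_induction_on with
  | _ i ih =>
    intro hi
    rcases lt_or_ge i k with hik | hki
    · exact hxy i hik
    · obtain ⟨j, rfl⟩ : ∃ j, i = k + j := ⟨i - k, by omega⟩
      rw [hx j (by omega), hy j (by omega)]
      exact ih j (by omega) (by omega)

theorem exists_eq_R_of_ne_top {m n : ℕ} {x : ℕ → Fin m} (h : R m n x ≠ ⊤) :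
    ∃ k : ℕ, R m n x = k ∧ 1 ≤ k ∧ ∀ i < n, x (k + i) = x i := by
  have hne : {j : ℕ∞ | ∃ k : ℕ, j = k ∧ 1 ≤ k ∧ ∀ i < n, x (k + i) = x i}.Nonempty :=
    nonempty_iff_ne_empty.2 fun h0 => h (by rw [R, h0, sInf_empty])
  exact csInf_mem hne

theorem exists_period_lt_rpow {m n : ℕ} {x : ℕ → Fin m} {a : ℝ} (hn : 1 < n)
    (h : elog (R m n x) / ENNReal.ofReal (Real.log n) < ENNReal.ofReal a) :
    ∃ k : ℕ, 1 ≤ k ∧ (k : ℝ) < (n : ℝ) ^ a ∧ ∀ i < n, x (k + i) = x i := by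
  have hlog : 0 < Real.log n := Real.log_pos (by exact_mod_cast hn)
  have h' : elog (R m n x) < ENNReal.ofReal (a * Real.log n) := by
    rw [ENNReal.ofReal_mul' hlog.le]
    exact (ENNReal.div_lt_iff (Or.inl (ENNReal.ofReal_pos.2 hlog).ne')
      (Or.inl ENNReal.ofReal_ne_top)).1 h
  obtain ⟨k, hR, hk1, hper⟩ := exists_eq_R_of_ne_top fun hR : R m n x = ⊤ => by
    simp [elog, hR] at h'
  refine ⟨k, hk1, ?_, hper⟩
  rw [elog, if_neg (by simp [hR]), hR, ENat.toNat_natCast, ENNReal.ofReal_lt_ofReal_iff'] at h'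
  rw [← Real.log_lt_log_iff (by positivity) (by positivity), Real.log_rpow (by positivity)]
  exact h'.1

def periodicCylinder (m n K : ℕ) (p : Fin K × (Fin K → Fin m)) : Set (ℕ → Fin m) :=
  {x | (∀ i : Fin K, x i = p.2 i) ∧ ∀ i < n, x (p.1 + 1 + i) = x i}

theorem setOf_liminf_le_subset_limsup {m : ℕ} {α : ℝ≥0∞} {a : ℝ}
    (hα : α < ENNReal.ofReal a) :
    {x : ℕ → Fin m |
      liminf (fun n => elog (R m n x) / ENNReal.ofReal (Real.log n)) atTop ≤ α} ⊆
      limsup (fun n => ⋃ p, periodicCylinder m n ⌊(n : ℝ) ^ a⌋₊ p) atTop := by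
  intro x hx
  rw [mem_limsup_iff_frequently_mem]
  have hfreq := frequently_lt_of_liminf_lt (by isBoundedDefault) (lt_of_le_of_lt hx hα)
  refine (hfreq.and_eventually (eventually_gt_atTop 1)).mono fun n ⟨hlt, hn⟩ => ?_
  obtain ⟨k, hk1, hkn, hper⟩ := exists_period_lt_rpow hn hlt
  have hkK : k - 1 < ⌊(n : ℝ) ^ a⌋₊ := by
    have := Nat.le_floor hkn.le
    omega
  refine mem_iUnion.2 ⟨(⟨k - 1, hkK⟩, fun i => x i), fun i => rfl, ?_⟩
  simpa only [Nat.sub_add_cancel hk1] using hper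

section Metric

variable {m : ℕ} [Fact (2 ≤ m)]

theorem edist_le_of_forall_lt_eq {n : ℕ} {x y : ℕ → Fin m} (h : ∀ i < n, x i = y i) :
    edist x y ≤ ENNReal.ofReal ((m : ℝ) ^ (-(n : ℝ))) := by
  have hm : (1 : ℝ) ≤ m := by exact_mod_cast (Fact.out : 2 ≤ m).trans' one_le_two
  rw [edist_dist]
  refine ENNReal.ofReal_le_ofReal ?_
  change shiftDist m x y ≤ _
  unfold shiftDist
  split_ifs with hxy
  · positivity
  · have hn : n ≤ PiNat.firstDiff x y :=
      not_lt.1 fun hlt => PiNat.apply_firstDiff_ne hxy (h _ hlt)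
    rw [← Real.rpow_intCast]
    push_cast
    exact Real.rpow_le_rpow_of_exponent_le hm (neg_le_neg (by exact_mod_cast hn))

theorem ediam_periodicCylinder_le (n K : ℕ) (p : Fin K × (Fin K → Fin m)) :
    ediam (periodicCylinder m n K p) ≤ ENNReal.ofReal ((m : ℝ) ^ (-(n : ℝ))) := by
  refine Metric.ediam_le fun x hx y hy => edist_le_of_forall_lt_eq fun i hi => ?_
  refine eq_of_forall_lt_add_of_period (Nat.succ_pos p.1) hx.2 hy.2 (fun j hj => ?_) i (by omega)
  have hjK : j < K := by omega
  exact (hx.1 ⟨j, hjK⟩).trans (hy.1 ⟨j, hjK⟩).symm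

theorem tsum_ediam_periodicCylinder_rpow_ne_top {a d : ℝ} (ha : a < 1) (hd : 0 < d) :
    ∑' n, ∑' p, ediam (periodicCylinder m n ⌊(n : ℝ) ^ a⌋₊ p) ^ d ≠ ∞ := by
  have hm : 1 < m := (Fact.out : 2 ≤ m)
  have hmR : (1 : ℝ) < m := by exact_mod_cast hm
  have hterm : ∀ n : ℕ, ∑' p, ediam (periodicCylinder m n ⌊(n : ℝ) ^ a⌋₊ p) ^ d ≤
      ENNReal.ofReal ((m : ℝ) ^ (2 * (n : ℝ) ^ a - d * n)) := by
    intro n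
    set K := ⌊(n : ℝ) ^ a⌋₊
    have hcount : K * m ^ K ≤ m ^ (2 * K) := by
      rw [two_mul, pow_add]
      exact Nat.mul_le_mul_right _ (Nat.lt_pow_self hm).le
    have hK : (2 * K : ℕ) ≤ 2 * (n : ℝ) ^ a := by
      push_cast
      gcongr
      exact Nat.floor_le (by positivity)
    calc ∑' p, ediam (periodicCylinder m n K p) ^ d
        ≤ ∑' _ : Fin K × (Fin K → Fin m), ENNReal.ofReal ((m : ℝ) ^ (-(n : ℝ) * d)) :=
          ENNReal.tsum_le_tsum fun p => by
            rw [Real.rpow_mul (by positivity),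
              ← ENNReal.ofReal_rpow_of_nonneg (by positivity) hd.le]
            exact ENNReal.rpow_le_rpow (ediam_periodicCylinder_le n K p) hd.le
      _ = ENNReal.ofReal ((K * m ^ K : ℕ) * (m : ℝ) ^ (-(n : ℝ) * d)) := by
          rw [tsum_fintype, Finset.sum_const, nsmul_eq_mul, ENNReal.ofReal_mul (by positivity),
            ENNReal.ofReal_natCast]
          simp
      _ ≤ ENNReal.ofReal ((m : ℝ) ^ (2 * (n : ℝ) ^ a) * (m : ℝ) ^ (-(n : ℝ) * d)) := by
          gcongr
          calc ((K * m ^ K : ℕ) : ℝ) ≤ ((m ^ (2 * K) : ℕ) : ℝ) := by exact_mod_cast hcount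
            _ = (m : ℝ) ^ ((2 * K : ℕ) : ℝ) := by rw [Real.rpow_natCast]; push_cast; rfl
            _ ≤ (m : ℝ) ^ (2 * (n : ℝ) ^ a) := Real.rpow_le_rpow_of_exponent_le hmR.le hK
      _ = ENNReal.ofReal ((m : ℝ) ^ (2 * (n : ℝ) ^ a - d * n)) := by
          rw [← Real.rpow_add (by positivity)]
          ring_nf
  refine ne_top_of_le_ne_top ?_ (ENNReal.tsum_le_tsum hterm)
  rw [← ENNReal.ofReal_tsum_of_nonneg (fun n => by positivity)
    (summable_rpow_mul_rpow_sub_mul hmR 2 ha hd)]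
  exact ENNReal.ofReal_ne_top

end Metric

/-- If `α < 1` then `{x : liminf (log R_n(x))/(log n) ≤ α}` has Hausdorff dimension 0. -/
theorem dimH_liminf_le_alpha (m : ℕ) [Fact (2 ≤ m)] (α : ℝ≥0∞) (hα : α < 1) :
    dimH {x : ℕ → Fin m |
      Filter.liminf (fun n => elog (R m n x) / ENNReal.ofReal (Real.log n))
        Filter.atTop ≤ α} = 0 := by
  obtain ⟨a, -, hαa, ha1⟩ := ENNReal.lt_iff_exists_real_btwn.1 hα
  rw [ENNReal.ofReal_lt_one] at ha1
  refine le_antisymm (ENNReal.le_of_forall_pos_le_add fun ε hε _ => ?_) zero_le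
  rw [zero_add]
  have hsum := tsum_ediam_periodicCylinder_rpow_ne_top (m := m) ha1 (NNReal.coe_pos.2 hε)
  exact (dimH_mono (setOf_liminf_le_subset_limsup hαa)).trans
    (dimH_limsup_le_of_tsum_ne_top hε hsum)

end RecurrenceZeroOne
end

section
/- Let p > 2 be a natural number and define F_p = {x ∈ {0,...,m-1}^ℕ : x_j = 0 for 1 ≤ j ≤ p, and x_{pk+1} = x_{pk+p} = 1 for all k ≥ 1}. Then the Hausdorff dimension of F_p equals (p-2)/p. -/
/-!
Reading the free coordinates of a point of `F_p` in order (those strictly inside a block after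
the first) is a bijection from `F_p` onto the full shift. The `D`-th free
coordinate sits at position about `p D / (p - 2)`, so this bijection is Hölder with exponent
`(p - 2) / p` and its inverse is Hölder with exponent `p / (p - 2)`. A Hölder map with exponent
`r` divides Hausdorff dimension by at most `r`, hence `dimH F_p = (p - 2) / p * dimH Σ`, and the
full shift `Σ` has dimension `1`: it is covered by `m ^ n` cylinders of diameter `m ^ (-n)`, and
base-`m` expansion maps it onto `[0, 1]` without increasing distances.
-/

open Filter Set Metric
open scoped ENNReal Topology

namespace RecurrenceZeroOne

open scoped NNReal MeasureTheory

section FullShift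

variable {m : ℕ} [hm : Fact (2 ≤ m)]

lemma one_lt_base : (1 : ℝ) < m := by
  exact_mod_cast hm.out

lemma base_pos : (0 : ℝ) < m := one_pos.trans one_lt_base

lemma dist_eq_inv_pow_firstDiff {x y : ℕ → Fin m} (h : x ≠ y) :
    dist x y = ((m : ℝ) ^ PiNat.firstDiff x y)⁻¹ := by
  change shiftDist m x y = _
  rw [shiftDist, if_neg h, zpow_neg, zpow_natCast]

lemma dist_le_inv_pow_of_forall_lt_eq {x y : ℕ → Fin m} {n : ℕ} (h : ∀ i < n, x i = y i) :
    dist x y ≤ ((m : ℝ) ^ n)⁻¹ := by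
  rcases eq_or_ne x y with rfl | hxy
  · rw [dist_self]
    exact inv_nonneg.mpr (pow_nonneg base_pos.le n)
  have hn : n ≤ PiNat.firstDiff x y :=
    not_lt.mp fun hlt => PiNat.apply_firstDiff_ne hxy (h _ hlt)
  rw [dist_eq_inv_pow_firstDiff hxy]
  exact inv_anti₀ (pow_pos base_pos n) (pow_le_pow_right₀ one_lt_base.le hn)

theorem holderWith_of_forall_lt_eq {f : (ℕ → Fin m) → ℕ → Fin m} {r : ℝ≥0} {c : ℕ}
    (hf : ∀ x y (n : ℕ), (∀ i < n, x i = y i) →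
      ∀ i : ℕ, (i : ℝ) + c < r * n → f x i = f y i) :
    HolderWith ((m : ℝ≥0) ^ c) r f := by
  intro x y
  rcases eq_or_ne (f x) (f y) with hfxy | hfxy
  · simp [hfxy]
  have hxy : x ≠ y := fun h => hfxy (h ▸ rfl)
  set k := PiNat.firstDiff x y
  set j := PiNat.firstDiff (f x) (f y)
  have hjk : (r : ℝ) * k ≤ j + c := not_lt.mp fun hlt =>
    PiNat.apply_firstDiff_ne hfxy (hf x y k (fun i => PiNat.apply_eq_of_lt_firstDiff) j hlt)
  have hdist : dist (f x) (f y) ≤ (m : ℝ) ^ c * dist x y ^ (r : ℝ) := by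
    rw [dist_eq_inv_pow_firstDiff hfxy, dist_eq_inv_pow_firstDiff hxy, ← Real.rpow_natCast,
      ← Real.rpow_natCast, ← Real.rpow_natCast, ← Real.rpow_neg base_pos.le,
      ← Real.rpow_neg base_pos.le, ← Real.rpow_mul base_pos.le, ← Real.rpow_add base_pos]
    exact Real.rpow_le_rpow_of_exponent_le one_lt_base.le (by linarith)
  rw [edist_dist, edist_dist, ENNReal.ofReal_rpow_of_nonneg dist_nonneg r.coe_nonneg,
    show (((m : ℝ≥0) ^ c : ℝ≥0) : ℝ≥0∞) = ENNReal.ofReal ((m : ℝ) ^ c) by simp,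
    ← ENNReal.ofReal_mul (by positivity)]
  exact ENNReal.ofReal_le_ofReal hdist

lemma lipschitzWith_ofDigits : LipschitzWith 1 (Real.ofDigits : (ℕ → Fin m) → ℝ) := by
  refine LipschitzWith.of_dist_le_mul fun x y => ?_
  rcases eq_or_ne x y with rfl | hxy
  · simp
  rw [NNReal.coe_one, one_mul, dist_eq_inv_pow_firstDiff hxy, Real.dist_eq]
  exact Real.abs_ofDigits_sub_ofDigits_le fun i => PiNat.apply_eq_of_lt_firstDiff

theorem dimH_le_of_covers {X : Type*} [EMetricSpace X] {s : Set X} {d : ℝ≥0} {C : ℝ≥0∞}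
    (hC : C ≠ ⊤) {ι : ℕ → Type*} [∀ n, Fintype (ι n)] (t : ∀ n, ι n → Set X)
    (r : ℕ → ℝ≥0∞) (hr : Tendsto r atTop (𝓝 0)) (ht : ∀ n i, ediam (t n i) ≤ r n)
    (hst : ∀ n, s ⊆ ⋃ i, t n i)
    (hsum : ∀ n, (Fintype.card (ι n) : ℝ≥0∞) * r n ^ (d : ℝ) ≤ C) :
    dimH s ≤ d := by
  borelize X
  refine dimH_le_of_hausdorffMeasure_ne_top (ne_top_of_le_ne_top hC ?_)
  have hsum' : ∀ n, ∑ i, ediam (t n i) ^ (d : ℝ) ≤ C := fun n =>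
    calc ∑ i, ediam (t n i) ^ (d : ℝ)
        ≤ ∑ _i : ι n, r n ^ (d : ℝ) :=
          Finset.sum_le_sum fun i _ => ENNReal.rpow_le_rpow (ht n i) d.coe_nonneg
      _ = (Fintype.card (ι n) : ℝ≥0∞) * r n ^ (d : ℝ) := by
          rw [Finset.sum_const, nsmul_eq_mul, Finset.card_univ]
      _ ≤ C := hsum n
  calc μH[d] s ≤ liminf (fun n => ∑ i, ediam (t n i) ^ (d : ℝ)) atTop :=
        MeasureTheory.Measure.hausdorffMeasure_le_liminf_sum _ s r hr t
          (.of_forall fun n i => ht n i) (.of_forall hst)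
    _ ≤ C := liminf_le_of_frequently_le' (.of_forall hsum')

lemma dimH_univ_le_one : dimH (univ : Set (ℕ → Fin m)) ≤ 1 := by
  have hm0 : (m : ℝ≥0∞) ≠ 0 := Nat.cast_ne_zero.mpr (by have := hm.out; omega)
  have hdiam : ∀ (n : ℕ) (c : Fin n → Fin m),
      ediam {x : ℕ → Fin m | ∀ i : Fin n, x i = c i} ≤ ((m : ℝ≥0∞) ^ n)⁻¹ := by
    refine fun n c => ediam_le fun x hx y hy => ?_
    have hxy : ∀ i < n, x i = y i := fun i hi => (hx ⟨i, hi⟩).trans (hy ⟨i, hi⟩).symm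
    rw [edist_dist, ← ENNReal.ofReal_natCast, ← ENNReal.ofReal_pow (Nat.cast_nonneg _),
      ← ENNReal.ofReal_inv_of_pos (pow_pos base_pos n)]
    exact ENNReal.ofReal_le_ofReal (dist_le_inv_pow_of_forall_lt_eq hxy)
  have hr : Tendsto (fun n : ℕ => ((m : ℝ≥0∞) ^ n)⁻¹) atTop (𝓝 0) := by
    simp_rw [ENNReal.inv_pow]
    exact ENNReal.tendsto_pow_atTop_nhds_zero_of_lt_one
      (ENNReal.inv_lt_one.mpr (by exact_mod_cast hm.out))
  refine dimH_le_of_covers ENNReal.one_ne_top _ _ hr hdiam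
    (fun n x _ => mem_iUnion.mpr ⟨fun i => x i, fun i => rfl⟩) fun n => ?_
  rw [Fintype.card_fun, Fintype.card_fin, Fintype.card_fin, NNReal.coe_one, ENNReal.rpow_one,
    Nat.cast_pow]
  exact (ENNReal.mul_inv_cancel (pow_ne_zero _ hm0) (by simp)).le

theorem dimH_univ_eq_one : dimH (univ : Set (ℕ → Fin m)) = 1 := by
  refine le_antisymm dimH_univ_le_one ?_
  have hIcc : dimH (Icc (0 : ℝ) 1) = 1 := by
    rw [Real.dimH_of_nonempty_interior (by simp), Module.finrank_self, Nat.cast_one]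
  calc (1 : ℝ≥0∞) = dimH (Icc (0 : ℝ) 1) := hIcc.symm
    _ ≤ dimH (Real.ofDigits '' (univ : Set (ℕ → Fin m))) :=
        dimH_mono (Real.ofDigits_SurjOn hm.out)
    _ ≤ dimH (univ : Set (ℕ → Fin m)) := lipschitzWith_ofDigits.dimH_image_le _

end FullShift

section FreeCoordinates

variable {p : ℕ}

/-- The coordinates left unconstrained in `F_p`: those strictly inside a block `k ≥ 1`. -/
def IsFree (p n : ℕ) : Prop := p ≤ n ∧ 1 ≤ n % p ∧ n % p ≤ p - 2

instance (p : ℕ) : DecidablePred (IsFree p) := fun _ =>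
  inferInstanceAs (Decidable (_ ∧ _ ∧ _))

/-- The position of the `D`-th free coordinate, counting from `0`. -/
def freePos (p D : ℕ) : ℕ := p * (D / (p - 2) + 1) + (D % (p - 2) + 1)

def freeIndex (p n : ℕ) : ℕ := (p - 2) * (n / p - 1) + (n % p - 1)

lemma freePos_div (hp : 2 < p) (D : ℕ) : freePos p D / p = D / (p - 2) + 1 := by
  have : D % (p - 2) + 1 < p := by have := Nat.mod_lt D (show 0 < p - 2 by omega); omega
  rw [freePos, Nat.mul_add_div (by omega), Nat.div_eq_of_lt this, add_zero]

lemma freePos_mod (hp : 2 < p) (D : ℕ) : freePos p D % p = D % (p - 2) + 1 := by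
  have : D % (p - 2) + 1 < p := by have := Nat.mod_lt D (show 0 < p - 2 by omega); omega
  rw [freePos, Nat.mul_add_mod, Nat.mod_eq_of_lt this]

lemma isFree_freePos (hp : 2 < p) (D : ℕ) : IsFree p (freePos p D) := by
  have hmod := freePos_mod hp D
  have := Nat.mod_lt D (show 0 < p - 2 by omega)
  exact ⟨le_add_right (Nat.le_mul_of_pos_right p (Nat.succ_pos _)), by omega, by omega⟩

lemma freeIndex_freePos (hp : 2 < p) (D : ℕ) : freeIndex p (freePos p D) = D := by
  rw [freeIndex, freePos_div hp, freePos_mod hp, Nat.add_sub_cancel, Nat.add_sub_cancel,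
    Nat.div_add_mod]

lemma freePos_freeIndex (hp : 2 < p) {n : ℕ} (hn : IsFree p n) :
    freePos p (freeIndex p n) = n := by
  obtain ⟨hpn, hmod1, hmod2⟩ := hn
  have hdiv : 1 ≤ n / p := (Nat.one_le_div_iff (by omega)).mpr hpn
  have hlt : n % p - 1 < p - 2 := by omega
  rw [freePos, freeIndex, Nat.mul_add_div (by omega), Nat.mul_add_mod, Nat.div_eq_of_lt hlt,
    Nat.mod_eq_of_lt hlt, add_zero, Nat.sub_add_cancel hdiv, Nat.sub_add_cancel hmod1,
    Nat.div_add_mod]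

lemma freePos_eq (hp : 2 < p) (D : ℕ) : freePos p D = D + 2 * (D / (p - 2)) + p + 1 := by
  obtain ⟨s, rfl⟩ : ∃ s, p = s + 2 := ⟨p - 2, by omega⟩
  have := Nat.div_add_mod D s
  simp only [freePos, Nat.add_sub_cancel]
  linarith

lemma mul_le_sub_two_mul_freePos (hp : 2 < p) (D : ℕ) : p * D ≤ (p - 2) * freePos p D := by
  obtain ⟨s, rfl⟩ : ∃ s, p = s + 2 := ⟨p - 2, by omega⟩
  have := Nat.lt_mul_div_succ D (show 0 < s by omega)
  rw [freePos_eq hp, Nat.add_sub_cancel]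
  nlinarith

lemma sub_two_mul_freePos_le (hp : 2 < p) (D : ℕ) : (p - 2) * freePos p D ≤ p * (D + p) := by
  obtain ⟨s, rfl⟩ : ∃ s, p = s + 2 := ⟨p - 2, by omega⟩
  have := Nat.mul_div_le D s
  rw [freePos_eq hp, Nat.add_sub_cancel]
  nlinarith

end FreeCoordinates

section Fp

variable {m p : ℕ}

variable (m p) in
def Fp : Set (ℕ → Fin m) :=
  {x | (∀ j < p, (x j : ℕ) = 0) ∧
      ∀ k, 1 ≤ k → (x (p * k) : ℕ) = 1 ∧ (x (p * k + (p - 1)) : ℕ) = 1}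

lemma mem_Fp_iff (hp : 2 < p) {x : ℕ → Fin m} :
    x ∈ Fp m p ↔ ∀ n, ¬ IsFree p n → (x n : ℕ) = if n < p then 0 else 1 := by
  constructor
  · rintro ⟨hinit, hblock⟩ n hn
    split_ifs with hnp
    · exact hinit n hnp
    have hk : 1 ≤ n / p := (Nat.one_le_div_iff (by omega)).mpr (not_lt.mp hnp)
    have hmod : n % p = 0 ∨ n % p = p - 1 := by
      have := Nat.mod_lt n (show 0 < p by omega)
      simp only [IsFree, not_and, not_le] at hn
      have := hn (not_lt.mp hnp)
      omega
    have hdm := Nat.div_add_mod n p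
    generalize n / p = k at hk hdm
    generalize n % p = r at hmod hdm
    subst hdm
    rcases hmod with rfl | rfl
    · exact (hblock k hk).1
    · exact (hblock k hk).2
  · intro h
    refine ⟨fun j hj => ?_, fun k hk => ⟨?_, ?_⟩⟩
    · simpa [hj] using h j fun hfree => by have := hfree.1; omega
    · have hle : p ≤ p * k := Nat.le_mul_of_pos_right p hk
      simpa [Nat.not_lt.mpr hle] using h (p * k) fun hfree => by
        have := hfree.2.1; rw [Nat.mul_mod_right] at this; omega
    · have hle : p ≤ p * k := Nat.le_mul_of_pos_right p hk
      have hmod : (p * k + (p - 1)) % p = p - 1 := by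
        rw [Nat.mul_add_mod, Nat.mod_eq_of_lt (by omega)]
      simpa [show ¬ (p * k + (p - 1) < p) by omega] using h (p * k + (p - 1)) fun hfree => by
        have := hfree.2.2; omega

variable [hm : Fact (2 ≤ m)]

variable (m p) in
/-- The point of `F_p` whose free coordinates, read in order, are the symbols of `a`. -/
def fill (a : ℕ → Fin m) (n : ℕ) : Fin m :=
  if IsFree p n then a (freeIndex p n)
  else if n < p then ⟨0, by have := hm.out; omega⟩ else ⟨1, by have := hm.out; omega⟩

lemma val_fill_of_not_isFree (a : ℕ → Fin m) {n : ℕ} (hn : ¬ IsFree p n) :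
    (fill m p a n : ℕ) = if n < p then 0 else 1 := by
  unfold fill
  split_ifs <;> rfl

lemma fill_freePos (hp : 2 < p) (a : ℕ → Fin m) (D : ℕ) : fill m p a (freePos p D) = a D := by
  rw [fill, if_pos (isFree_freePos hp D), freeIndex_freePos hp]

lemma range_fill (hp : 2 < p) : range (fill m p) = Fp m p := by
  ext x
  constructor
  · rintro ⟨a, rfl⟩
    exact (mem_Fp_iff hp).mpr fun n hn => val_fill_of_not_isFree a hn
  · intro hx
    refine ⟨x ∘ freePos p, funext fun n => ?_⟩
    by_cases hn : IsFree p n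
    · rw [fill, if_pos hn, Function.comp_apply, freePos_freeIndex hp hn]
    · exact Fin.ext ((val_fill_of_not_isFree _ hn).trans ((mem_Fp_iff hp).mp hx n hn).symm)

lemma image_comp_freePos_Fp (hp : 2 < p) : (· ∘ freePos p) '' Fp m p = univ := by
  refine eq_univ_of_forall fun a => ⟨fill m p a, ?_, funext (fill_freePos hp a)⟩
  rw [← range_fill hp]
  exact mem_range_self a

lemma holderWith_comp_freePos (hp : 2 < p) :
    HolderWith ((m : ℝ≥0) ^ p) ((p - 2 : ℕ) / p : ℝ≥0)
      (· ∘ freePos p : (ℕ → Fin m) → ℕ → Fin m) := by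
  refine holderWith_of_forall_lt_eq fun x y n hxy i hi => hxy _ ?_
  have hp0 : (0 : ℝ) < p := by positivity
  have hlt : p * (i + p) < (p - 2) * n := by
    rw [NNReal.coe_div, NNReal.coe_natCast, NNReal.coe_natCast, div_mul_eq_mul_div,
      lt_div_iff₀ hp0] at hi
    exact_mod_cast (by linarith : (p : ℝ) * (i + p) < (p - 2 : ℕ) * n)
  exact Nat.lt_of_mul_lt_mul_left ((sub_two_mul_freePos_le hp i).trans_lt hlt)

lemma holderWith_fill (hp : 2 < p) :
    HolderWith 1 ((p - 2 : ℕ) / p : ℝ≥0)⁻¹ (fill m p) := by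
  refine pow_zero (m : ℝ≥0) ▸ holderWith_of_forall_lt_eq fun a b n hab i hi => ?_
  by_cases hfree : IsFree p i
  · rw [fill, fill, if_pos hfree, if_pos hfree]
    refine hab _ (Nat.lt_of_mul_lt_mul_left (a := p) ?_)
    have hs0 : (0 : ℝ) < (p - 2 : ℕ) := by exact_mod_cast (show 0 < p - 2 by omega)
    have hlt : (p - 2) * i < p * n := by
      rw [NNReal.coe_inv, NNReal.coe_div, inv_div, NNReal.coe_natCast, NNReal.coe_natCast,
        div_mul_eq_mul_div, lt_div_iff₀ hs0, Nat.cast_zero, add_zero] at hi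
      exact_mod_cast (by linarith : ((p - 2 : ℕ) : ℝ) * i < p * n)
    calc p * freeIndex p i ≤ (p - 2) * freePos p (freeIndex p i) :=
          mul_le_sub_two_mul_freePos hp _
      _ = (p - 2) * i := by rw [freePos_freeIndex hp hfree]
      _ < p * n := hlt
  · exact Fin.ext ((val_fill_of_not_isFree a hfree).trans (val_fill_of_not_isFree b hfree).symm)

end Fp

lemma coe_sub_two_div {p : ℕ} (hp : 2 < p) :
    (((p - 2 : ℕ) / p : ℝ≥0) : ℝ≥0∞) = ((p : ℝ≥0∞) - 2) / p := by
  rw [ENNReal.coe_div (by exact_mod_cast (show p ≠ 0 by omega)), ENNReal.coe_natCast,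
    ENNReal.coe_natCast, ENNReal.natCast_sub, Nat.cast_ofNat]

/-- The set `F_p` of sequences starting with `p` zeros and whose subsequent blocks of
length `p` begin and end with `1` has Hausdorff dimension `(p-2)/p`. -/
theorem dimH_Fp (m : ℕ) [Fact (2 ≤ m)] (p : ℕ) (hp : 2 < p) :
    dimH {x : ℕ → Fin m | (∀ j < p, (x j : ℕ) = 0) ∧
        ∀ k, 1 ≤ k → (x (p * k) : ℕ) = 1 ∧ (x (p * k + (p - 1)) : ℕ) = 1}
      = ((p : ℝ≥0∞) - 2) / (p : ℝ≥0∞) := by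
  change dimH (Fp m p) = _
  have he : 0 < ((p - 2 : ℕ) / p : ℝ≥0) :=
    div_pos (mod_cast Nat.sub_pos_of_lt hp) (by positivity)
  rw [← coe_sub_two_div hp]
  apply le_antisymm
  · calc dimH (Fp m p) = dimH (range (fill m p)) := by rw [range_fill hp]
      _ ≤ dimH (univ : Set (ℕ → Fin m)) / ↑((p - 2 : ℕ) / p : ℝ≥0)⁻¹ :=
          (holderWith_fill hp).dimH_range_le (inv_pos.mpr he)
      _ = ↑((p - 2 : ℕ) / p : ℝ≥0) := by
          rw [dimH_univ_eq_one, ENNReal.coe_inv he.ne', one_div, inv_inv]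
  · have h := (holderWith_comp_freePos (m := m) hp).dimH_image_le he (Fp m p)
    rw [image_comp_freePos_Fp hp, dimH_univ_eq_one,
      ENNReal.le_div_iff_mul_le (.inl (by exact_mod_cast he.ne')) (.inl ENNReal.coe_ne_top),
      one_mul] at h
    exact h

end RecurrenceZeroOne
end

section
/- Let φ: ℕ → ℝ⁺ and C ≥ 1. Then there exists a strictly increasing sequence of positive integers {n_i} such that limsup_{i→∞} φ(n_i)/log n_i = limsup_{n→∞} φ(n)/log n, liminf_{i→∞} φ(n_i+1)/log(n_i+1) = liminf_{n→∞} φ(n)/log n, lim_{i→∞} (log n_{i+1})/(log n_i) = C, and lim_{i→∞} (log n_i)/i = ∞. -/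
open Filter Set Metric
open scoped ENNReal Topology

namespace RecurrenceZeroOne

/-! Pick indices `A j` along which `φ n / log n` tends to its limsup and `B j` along which it
tends to its liminf. Choose anchors `N k`, alternately of the form `A j` and `B j - 1`, so large
that `T k = log (N k)` satisfies `T (k + 1) ≥ exp ((k + 2) (log C + 1)) T k`. Between consecutive
anchors interpolate `log n_i` geometrically, in `⌈log (T (k + 1) / T k) / (log C + 1 / (k + 1))⌉`
equal steps. The per-step ratio then tends to `C` (the blocks get longer, so the ceiling is
negligible), and the increments of `log n_i` tend to infinity, so `log n_i / i → ∞`. Finally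
`n_i = ⌈exp t_i⌉` changes `log n_i` by at most `1`. -/

section LimsupAlongSubsequence

variable {α β ι κ : Type*} [CompleteLinearOrder α] [TopologicalSpace α] [OrderTopology α]

theorem limsup_comp_eq_of_tendsto_comp {u : β → α} {v : ι → β} {ψ : κ → ι}
    {g : Filter β} {f : Filter ι} {l : Filter κ} [l.NeBot] (hv : Tendsto v f g)
    (hψ : Tendsto ψ l f) (h : Tendsto (u ∘ v ∘ ψ) l (𝓝 (limsup u g))) :
    limsup (u ∘ v) f = limsup u g :=
  le_antisymm hv.limsup_comp_le_limsup
    (h.limsup_eq.symm.trans_le (hψ.limsup_comp_le_limsup (u := u ∘ v)))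

theorem liminf_comp_eq_of_tendsto_comp {u : β → α} {v : ι → β} {ψ : κ → ι}
    {g : Filter β} {f : Filter ι} {l : Filter κ} [l.NeBot] (hv : Tendsto v f g)
    (hψ : Tendsto ψ l f) (h : Tendsto (u ∘ v ∘ ψ) l (𝓝 (liminf u g))) :
    liminf (u ∘ v) f = liminf u g :=
  limsup_comp_eq_of_tendsto_comp (α := αᵒᵈ) hv hψ h

end LimsupAlongSubsequence

theorem exists_seq_succ_eq_apply_ge (c : ℕ → ℕ → ℕ) (hc : ∀ k, Tendsto (c k) atTop atTop)
    (b : ℕ → ℕ → ℕ) (x₀ : ℕ) :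
    ∃ N m : ℕ → ℕ, N 0 = x₀ ∧
      ∀ k, k ≤ m k ∧ N (k + 1) = c k (m k) ∧ b k (N k) ≤ N (k + 1) := by
  choose M hM using fun k y =>
    ((eventually_ge_atTop k).and ((hc k).eventually_ge_atTop y)).exists
  let N : ℕ → ℕ := fun k => Nat.rec x₀ (fun k x => c k (M k (b k x))) k
  exact ⟨N, fun k => M k (b k (N k)), rfl, fun k => ⟨(hM _ _).1, rfl, (hM _ _).2⟩⟩

section Blocks

noncomputable def blockIndex (I : ℕ → ℕ) (i : ℕ) : ℕ := Nat.findGreatest (fun k => I k ≤ i) i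

variable {I : ℕ → ℕ}

theorem blockIndex_eq (hI : StrictMono I) {i k : ℕ} (hk : I k ≤ i) (hi : i < I (k + 1)) :
    blockIndex I i = k :=
  Nat.findGreatest_eq_iff.2 ⟨(hI.id_le k).trans hk, fun _ => hk,
    fun _ hkn _ hn => (hi.trans_le (hI.monotone hkn)).not_ge hn⟩

theorem mem_block_blockIndex (hI : StrictMono I) (hI0 : I 0 = 0) (i : ℕ) :
    I (blockIndex I i) ≤ i ∧ i < I (blockIndex I i + 1) := by
  refine ⟨Nat.findGreatest_spec (P := fun k => I k ≤ i) (Nat.zero_le i) (by simp [hI0]), ?_⟩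
  by_contra! h
  have := Nat.le_findGreatest (P := fun k => I k ≤ i) ((hI.id_le _).trans h) h
  exact (Nat.lt_succ_self _).not_ge this

theorem tendsto_blockIndex (hI : StrictMono I) : Tendsto (blockIndex I) atTop atTop :=
  tendsto_atTop_atTop.2 fun k =>
    ⟨I k, fun _ hi => Nat.le_findGreatest ((hI.id_le k).trans hi) hi⟩

end Blocks

theorem tendsto_div_atTop_of_tendsto_sub {t : ℕ → ℝ}
    (ht : Tendsto (fun i => t (i + 1) - t i) atTop atTop) :
    Tendsto (fun i => t i / i) atTop atTop := by
  refine tendsto_atTop.2 fun M => ?_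
  set M' := max M 1
  obtain ⟨N, hN⟩ := eventually_atTop.1 (tendsto_atTop.1 ht (2 * M'))
  have hlin : ∀ d : ℕ, t N + 2 * M' * d ≤ t (N + d) := by
    intro d
    induction d with
    | zero => simp
    | succ d ih =>
      have := hN (N + d) (by omega)
      push_cast
      rw [← add_assoc]
      linarith
  filter_upwards [eventually_ge_atTop N, eventually_ge_atTop ⌈2 * N + |t N|⌉₊,
    eventually_gt_atTop 0] with i hiN hi hi0
  obtain ⟨d, rfl⟩ := Nat.exists_eq_add_of_le hiN
  have hi' : (2 * N + |t N| : ℝ) ≤ (N + d : ℕ) := Nat.ceil_le.1 hi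
  have hM' : 1 ≤ M' := le_max_right _ _
  rw [le_div_iff₀ (by exact_mod_cast hi0)]
  push_cast at hi' ⊢
  nlinarith [hlin d, le_max_left M 1, neg_abs_le (t N), abs_nonneg (t N),
    mul_le_mul_of_nonneg_left hi' (zero_le_one.trans hM')]

section Rounding

open Real Asymptotics

theorem exp_add_one_le_exp_add_one {t : ℝ} (ht : 0 ≤ t) : exp t + 1 ≤ exp (t + 1) := by
  rw [exp_add]
  nlinarith [add_one_le_exp (1 : ℝ), one_le_exp ht]

theorem log_natCeil_exp_mem {t : ℝ} (ht : 0 ≤ t) :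
    t ≤ log ⌈exp t⌉₊ ∧ log ⌈exp t⌉₊ ≤ t + 1 := by
  have hpos : 0 < (⌈exp t⌉₊ : ℝ) := (exp_pos t).trans_le (Nat.le_ceil _)
  refine ⟨(le_log_iff_exp_le hpos).2 (Nat.le_ceil _), (log_le_iff_le_exp hpos).2 ?_⟩
  exact (Nat.ceil_lt_add_one (exp_pos t).le).le.trans (exp_add_one_le_exp_add_one ht)

theorem natCeil_exp_lt_natCeil_exp {s t : ℝ} (hs : 0 ≤ s) (hst : s + 1 ≤ t) :
    ⌈exp s⌉₊ < ⌈exp t⌉₊ := by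
  have : (⌈exp s⌉₊ : ℝ) < ⌈exp t⌉₊ := calc
    (⌈exp s⌉₊ : ℝ) < exp s + 1 := Nat.ceil_lt_add_one (exp_pos s).le
    _ ≤ exp (s + 1) := exp_add_one_le_exp_add_one hs
    _ ≤ exp t := exp_le_exp.2 hst
    _ ≤ ⌈exp t⌉₊ := Nat.le_ceil _
  exact_mod_cast this

theorem le_log_of_natCeil_exp_le {x : ℝ} {N : ℕ} (h : ⌈exp x⌉₊ ≤ N) : x ≤ log N := by
  have hN : (⌈exp x⌉₊ : ℝ) ≤ N := by exact_mod_cast h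
  exact (le_log_iff_exp_le ((exp_pos x).trans_le ((Nat.le_ceil _).trans hN))).2
    ((Nat.le_ceil _).trans hN)

variable {t : ℕ → ℝ}

theorem isEquivalent_log_natCeil_exp (ht0 : ∀ i, 0 ≤ t i) (ht : Tendsto t atTop atTop) :
    (fun i => log ⌈exp (t i)⌉₊) ~[atTop] t := by
  refine IsLittleO.isEquivalent <|
    (IsBigO.of_bound 1 (Eventually.of_forall fun i => ?_)).trans_isLittleO
      ((isLittleO_one_left_iff ℝ).2 (tendsto_norm_atTop_atTop.comp ht))
  obtain ⟨h₁, h₂⟩ := log_natCeil_exp_mem (ht0 i)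
  rw [Pi.sub_apply, norm_one, Real.norm_eq_abs, abs_le]
  constructor <;> linarith

theorem tendsto_log_natCeil_exp_succ_div (ht0 : ∀ i, 0 ≤ t i) (ht : Tendsto t atTop atTop)
    {C : ℝ} (hC : Tendsto (fun i => t (i + 1) / t i) atTop (𝓝 C)) :
    Tendsto (fun i => log ⌈exp (t (i + 1))⌉₊ / log ⌈exp (t i)⌉₊) atTop (𝓝 C) := by
  have h := isEquivalent_log_natCeil_exp ht0 ht
  exact ((h.comp_tendsto (tendsto_add_atTop_nat 1)).div h).symm.tendsto_nhds hC

theorem tendsto_log_natCeil_exp_div (ht0 : ∀ i, 0 ≤ t i)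
    (ht : Tendsto (fun i => t i / i) atTop atTop) :
    Tendsto (fun i => log ⌈exp (t i)⌉₊ / i) atTop atTop :=
  tendsto_atTop_mono (fun i => div_le_div_of_nonneg_right (log_natCeil_exp_mem (ht0 i)).1
    i.cast_nonneg) ht

end Rounding

namespace LogInterpolation

open Real

variable {C : ℝ} {T : ℕ → ℝ}

/-- The first bound makes the increments of `interp` on the `k`-th block at least `k + 1`, the
second makes that block at least `k + 2` steps long. -/
structure GrowsFast (C : ℝ) (T : ℕ → ℝ) : Prop where
  two_mul_sq_le : ∀ k : ℕ, 2 * ((k : ℝ) + 1) ^ 2 ≤ T k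
  exp_mul_le : ∀ k : ℕ, exp ((k + 2) * (log C + 1)) * T k ≤ T (k + 1)

variable (C) in
/-- The `1 / (k + 1)` keeps the steps positive when `C = 1`. -/
noncomputable def stepTarget (k : ℕ) : ℝ := log C + 1 / (k + 1)

variable (T) in
noncomputable def blockLog (k : ℕ) : ℝ := log (T (k + 1) / T k)

variable (C T) in
noncomputable def blockLen (k : ℕ) : ℕ := ⌈blockLog T k / stepTarget C k⌉₊

variable (C T) in
noncomputable def blockStart (k : ℕ) : ℕ := ∑ l ∈ Finset.range k, blockLen C T l

variable (C T) in
noncomputable def stepRate (k : ℕ) : ℝ := blockLog T k / blockLen C T k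

variable (C T) in
/-- On the `k`-th block `interp` runs geometrically from `T k` to `T (k + 1)`. -/
noncomputable def interp (i : ℕ) : ℝ :=
  T (blockIndex (blockStart C T) i) *
    exp ((i - blockStart C T (blockIndex (blockStart C T) i)) *
      stepRate C T (blockIndex (blockStart C T) i))

theorem stepTarget_pos (hC : 1 ≤ C) (k : ℕ) : 0 < stepTarget C k := by
  have := log_nonneg hC
  unfold stepTarget
  positivity

theorem stepTarget_le (k : ℕ) : stepTarget C k ≤ log C + 1 := by
  unfold stepTarget
  gcongr
  exact div_le_one_of_le₀ (by linarith [k.cast_nonneg (α := ℝ)]) (by positivity)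

theorem one_div_le_stepTarget (hC : 1 ≤ C) (k : ℕ) : 1 / ((k : ℝ) + 1) ≤ stepTarget C k :=
  le_add_of_nonneg_left (log_nonneg hC)

theorem tendsto_stepTarget : Tendsto (stepTarget C) atTop (𝓝 (log C)) := by
  have h := (tendsto_const_nhds (x := log C)).add
    (tendsto_one_div_add_atTop_nhds_zero_nat (𝕜 := ℝ))
  rw [add_zero] at h
  exact h

theorem blockStart_zero : blockStart C T 0 = 0 := Finset.sum_range_zero _

theorem blockStart_succ (k : ℕ) : blockStart C T (k + 1) = blockStart C T k + blockLen C T k :=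
  Finset.sum_range_succ _ _

theorem GrowsFast.pos (hT : GrowsFast C T) (k : ℕ) : 0 < T k :=
  (by positivity : (0 : ℝ) < 2 * ((k : ℝ) + 1) ^ 2).trans_le (hT.two_mul_sq_le k)

theorem GrowsFast.mul_exp_blockLog (hT : GrowsFast C T) (k : ℕ) :
    T k * exp (blockLog T k) = T (k + 1) := by
  rw [blockLog, exp_log (div_pos (hT.pos _) (hT.pos _)), mul_div_cancel₀ _ (hT.pos k).ne']

theorem GrowsFast.le_blockLog (hT : GrowsFast C T) (k : ℕ) :
    (k + 2) * (log C + 1) ≤ blockLog T k :=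
  (le_log_iff_exp_le (div_pos (hT.pos _) (hT.pos _))).2
    ((le_div_iff₀ (hT.pos k)).2 (hT.exp_mul_le k))

theorem GrowsFast.add_two_le_blockLen (hT : GrowsFast C T) (hC : 1 ≤ C) (k : ℕ) :
    k + 2 ≤ blockLen C T k := by
  have h : ((k + 2 : ℕ) : ℝ) ≤ blockLog T k / stepTarget C k := by
    rw [le_div_iff₀ (stepTarget_pos hC k)]
    push_cast
    nlinarith [hT.le_blockLog k, stepTarget_le (C := C) k, k.cast_nonneg (α := ℝ)]
  exact_mod_cast h.trans (Nat.le_ceil _)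

theorem GrowsFast.blockLen_pos (hT : GrowsFast C T) (hC : 1 ≤ C) (k : ℕ) :
    0 < blockLen C T k :=
  (hT.add_two_le_blockLen hC k).trans_lt' (by omega)

theorem GrowsFast.blockLen_mul_stepRate (hT : GrowsFast C T) (hC : 1 ≤ C) (k : ℕ) :
    blockLen C T k * stepRate C T k = blockLog T k :=
  mul_div_cancel₀ _ (Nat.cast_ne_zero.2 (hT.blockLen_pos hC k).ne')

theorem GrowsFast.blockLog_pos (hT : GrowsFast C T) (hC : 1 ≤ C) (k : ℕ) :
    0 < blockLog T k := by
  have := log_nonneg hC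
  exact (by positivity : (0 : ℝ) < (k + 2) * (log C + 1)).trans_le (hT.le_blockLog k)

theorem GrowsFast.stepRate_mem (hT : GrowsFast C T) (hC : 1 ≤ C) (k : ℕ) :
    stepTarget C k - stepTarget C k / blockLen C T k ≤ stepRate C T k ∧
      stepRate C T k ≤ stepTarget C k := by
  have hL := stepTarget_pos hC k
  have hj : (0 : ℝ) < blockLen C T k := Nat.cast_pos.2 (hT.blockLen_pos hC k)
  have hθ : 0 ≤ blockLog T k / stepTarget C k := div_nonneg (hT.blockLog_pos hC k).le hL.le
  have hup : blockLog T k ≤ blockLen C T k * stepTarget C k :=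
    (div_le_iff₀ hL).1 (Nat.le_ceil _)
  have hceil : (blockLen C T k : ℝ) < blockLog T k / stepTarget C k + 1 :=
    Nat.ceil_lt_add_one hθ
  have hlo : (blockLen C T k - 1) * stepTarget C k < blockLog T k :=
    (lt_div_iff₀ hL).1 (by linarith)
  unfold stepRate
  constructor
  · rw [le_div_iff₀ hj, sub_mul, div_mul_cancel₀ _ hj.ne']
    linarith
  · rw [div_le_iff₀ hj]
    linarith

theorem GrowsFast.stepTarget_div_two_le_stepRate (hT : GrowsFast C T) (hC : 1 ≤ C) (k : ℕ) :
    stepTarget C k / 2 ≤ stepRate C T k := by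
  have hL := stepTarget_pos hC k
  have hj₂ : 2 ≤ blockLen C T k := (by omega : 2 ≤ k + 2).trans (hT.add_two_le_blockLen hC k)
  have hj : (2 : ℝ) ≤ blockLen C T k := by exact_mod_cast hj₂
  have := div_le_div_of_nonneg_left hL.le two_pos hj
  linarith [(hT.stepRate_mem hC k).1]

theorem GrowsFast.stepRate_nonneg (hT : GrowsFast C T) (hC : 1 ≤ C) (k : ℕ) :
    0 ≤ stepRate C T k :=
  (div_nonneg (stepTarget_pos hC k).le two_pos.le).trans (hT.stepTarget_div_two_le_stepRate hC k)

theorem GrowsFast.tendsto_stepRate (hT : GrowsFast C T) (hC : 1 ≤ C) :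
    Tendsto (stepRate C T) atTop (𝓝 (log C)) := by
  have hj : Tendsto (fun k => (blockLen C T k : ℝ)) atTop atTop :=
    tendsto_natCast_atTop_atTop.comp
      (tendsto_atTop_mono (hT.add_two_le_blockLen hC) (tendsto_add_atTop_nat 2))
  have hlo := (tendsto_stepTarget (C := C)).sub ((tendsto_stepTarget (C := C)).div_atTop hj)
  rw [sub_zero] at hlo
  exact tendsto_of_tendsto_of_tendsto_of_le_of_le hlo tendsto_stepTarget
    (fun k => (hT.stepRate_mem hC k).1) (fun k => (hT.stepRate_mem hC k).2)

theorem GrowsFast.strictMono_blockStart (hT : GrowsFast C T) (hC : 1 ≤ C) :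
    StrictMono (blockStart C T) :=
  strictMono_nat_of_lt_succ fun k => by
    rw [blockStart_succ]
    exact Nat.lt_add_of_pos_right (hT.blockLen_pos hC k)

theorem GrowsFast.interp_blockStart_add (hT : GrowsFast C T) (hC : 1 ≤ C) {k d : ℕ}
    (hd : d < blockLen C T k) :
    interp C T (blockStart C T k + d) = T k * exp (d * stepRate C T k) := by
  rw [interp, blockIndex_eq (hT.strictMono_blockStart hC) (Nat.le_add_right _ _)
    (by rw [blockStart_succ]; omega)]
  push_cast
  ring_nf

theorem GrowsFast.interp_blockStart (hT : GrowsFast C T) (hC : 1 ≤ C) (k : ℕ) :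
    interp C T (blockStart C T k) = T k := by
  simpa using hT.interp_blockStart_add hC (hT.blockLen_pos hC k)

theorem GrowsFast.interp_blockStart_add_succ (hT : GrowsFast C T) (hC : 1 ≤ C) {k d : ℕ}
    (hd : d < blockLen C T k) :
    interp C T (blockStart C T k + d + 1) =
      interp C T (blockStart C T k + d) * exp (stepRate C T k) := by
  rw [hT.interp_blockStart_add hC hd, mul_assoc, ← exp_add, add_assoc]
  rcases (show d + 1 ≤ blockLen C T k from hd).lt_or_eq with hd' | hd'
  · rw [hT.interp_blockStart_add hC hd']
    push_cast
    ring_nf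
  · rw [hd', ← blockStart_succ, hT.interp_blockStart hC, ← hT.mul_exp_blockLog,
      ← hT.blockLen_mul_stepRate hC, ← hd']
    push_cast
    ring_nf

theorem GrowsFast.interp_succ (hT : GrowsFast C T) (hC : 1 ≤ C) (i : ℕ) :
    interp C T (i + 1) = interp C T i * exp (stepRate C T (blockIndex (blockStart C T) i)) := by
  obtain ⟨h₁, h₂⟩ := mem_block_blockIndex (hT.strictMono_blockStart hC) blockStart_zero i
  obtain ⟨d, hd⟩ := Nat.exists_eq_add_of_le h₁
  generalize blockIndex (blockStart C T) i = k at h₁ h₂ hd ⊢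
  subst hd
  rw [blockStart_succ] at h₂
  exact hT.interp_blockStart_add_succ hC (by omega)

theorem GrowsFast.le_interp (hT : GrowsFast C T) (hC : 1 ≤ C) (i : ℕ) :
    T (blockIndex (blockStart C T) i) ≤ interp C T i := by
  have h := (mem_block_blockIndex (hT.strictMono_blockStart hC) blockStart_zero i).1
  refine le_mul_of_one_le_right (hT.pos _).le (one_le_exp (mul_nonneg ?_ (hT.stepRate_nonneg hC _)))
  exact sub_nonneg.2 (by exact_mod_cast h)

theorem GrowsFast.interp_pos (hT : GrowsFast C T) (hC : 1 ≤ C) (i : ℕ) : 0 < interp C T i :=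
  (hT.pos _).trans_le (hT.le_interp hC i)

theorem GrowsFast.blockIndex_add_one_le_interp_sub (hT : GrowsFast C T) (hC : 1 ≤ C) (i : ℕ) :
    (blockIndex (blockStart C T) i : ℝ) + 1 ≤ interp C T (i + 1) - interp C T i := by
  set k := blockIndex (blockStart C T) i
  set q := stepRate C T k
  have hq : 1 / (2 * ((k : ℝ) + 1)) ≤ q := by
    have := hT.stepTarget_div_two_le_stepRate hC k
    have := one_div_le_stepTarget hC k
    rw [← div_div, div_right_comm]
    linarith
  rw [hT.interp_succ hC]
  calc (k : ℝ) + 1 = 2 * ((k : ℝ) + 1) ^ 2 * (1 / (2 * ((k : ℝ) + 1))) := by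
        field_simp
    _ ≤ T k * q := mul_le_mul (hT.two_mul_sq_le k) hq (by positivity) (hT.pos k).le
    _ ≤ interp C T i * (exp q - 1) := mul_le_mul (hT.le_interp hC i)
        (by linarith [add_one_le_exp q]) (hT.stepRate_nonneg hC k) (hT.interp_pos hC i).le
    _ = interp C T i * exp q - interp C T i := by ring

theorem GrowsFast.tendsto_interp_div (hT : GrowsFast C T) (hC : 1 ≤ C) :
    Tendsto (fun i => interp C T i / i) atTop atTop :=
  tendsto_div_atTop_of_tendsto_sub (tendsto_atTop_mono (hT.blockIndex_add_one_le_interp_sub hC)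
    (tendsto_atTop_add_const_right _ 1 (tendsto_natCast_atTop_atTop.comp
      (tendsto_blockIndex (hT.strictMono_blockStart hC)))))

theorem GrowsFast.tendsto_interp (hT : GrowsFast C T) (hC : 1 ≤ C) :
    Tendsto (interp C T) atTop atTop := by
  have hT_top : Tendsto T atTop atTop := tendsto_atTop_mono (fun k => by
    nlinarith [hT.two_mul_sq_le k, k.cast_nonneg (α := ℝ)]) tendsto_natCast_atTop_atTop
  exact tendsto_atTop_mono (hT.le_interp hC)
    (hT_top.comp (tendsto_blockIndex (hT.strictMono_blockStart hC)))

theorem GrowsFast.tendsto_interp_succ_div (hT : GrowsFast C T) (hC : 1 ≤ C) :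
    Tendsto (fun i => interp C T (i + 1) / interp C T i) atTop (𝓝 C) := by
  have h := (continuous_exp.tendsto _).comp ((hT.tendsto_stepRate hC).comp
    (tendsto_blockIndex (hT.strictMono_blockStart hC)))
  rw [exp_log (by linarith)] at h
  refine h.congr fun i => ?_
  rw [hT.interp_succ hC, mul_div_cancel_left₀ _ (hT.interp_pos hC i).ne']
  rfl

theorem growsFast_log (C : ℝ) {N : ℕ → ℕ} (h₀ : N 0 = ⌈exp 2⌉₊)
    (hsucc : ∀ k : ℕ,
      ⌈exp (max (exp ((k + 2) * (log C + 1)) * log (N k)) (2 * ((k : ℝ) + 2) ^ 2))⌉₊ ≤ N (k + 1)) :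
    GrowsFast C fun k => log (N k) where
  two_mul_sq_le k := by
    cases k with
    | zero => simpa using le_log_of_natCeil_exp_le h₀.ge
    | succ k =>
      have := (le_max_right _ _).trans (le_log_of_natCeil_exp_le (hsucc k))
      push_cast
      linarith
  exp_mul_le k := (le_max_left _ _).trans (le_log_of_natCeil_exp_le (hsucc k))

theorem exists_strictMono_log_ratio_tendsto_through {C : ℝ} (hC : 1 ≤ C) (c : ℕ → ℕ → ℕ)
    (hc : ∀ k, Tendsto (c k) atTop atTop) :
    ∃ n I m : ℕ → ℕ, StrictMono n ∧ (∀ i, 1 ≤ n i) ∧ StrictMono I ∧ (∀ k, k ≤ m k) ∧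
      (∀ k, n (I (k + 1)) = c k (m k)) ∧
      Tendsto (fun i => log (n (i + 1)) / log (n i)) atTop (𝓝 C) ∧
      Tendsto (fun i => log (n i) / i) atTop atTop := by
  obtain ⟨N, m, hN₀, hN⟩ := exists_seq_succ_eq_apply_ge c hc
    (fun k x => ⌈exp (max (exp ((k + 2) * (log C + 1)) * log x) (2 * ((k : ℝ) + 2) ^ 2))⌉₊)
    ⌈exp 2⌉₊
  set T : ℕ → ℝ := fun k => log (N k)
  have hT : GrowsFast C T := growsFast_log C hN₀ fun k => (hN k).2.2
  set t := interp C T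
  have ht₀ : ∀ i, 0 ≤ t i := fun i => (hT.interp_pos hC i).le
  have htN : ∀ k, ⌈exp (t (blockStart C T k))⌉₊ = N k := fun k => by
    have hNk : 0 < N k := Nat.pos_of_ne_zero fun h => (hT.pos k).ne' (by simp [T, h])
    rw [show t (blockStart C T k) = T k from hT.interp_blockStart hC k,
      exp_log (by exact_mod_cast hNk), Nat.ceil_natCast]
  refine ⟨fun i => ⌈exp (t i)⌉₊, blockStart C T, m,
    strictMono_nat_of_lt_succ fun i => natCeil_exp_lt_natCeil_exp (ht₀ i) ?_,
    fun i => Nat.ceil_pos.2 (exp_pos _),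
    hT.strictMono_blockStart hC, fun k => (hN k).1, fun k => (htN (k + 1)).trans (hN k).2.1,
    tendsto_log_natCeil_exp_succ_div ht₀ (hT.tendsto_interp hC) (hT.tendsto_interp_succ_div hC),
    tendsto_log_natCeil_exp_div ht₀ (hT.tendsto_interp_div hC)⟩
  linarith [hT.blockIndex_add_one_le_interp_sub hC i,
    (blockIndex (blockStart C T) i).cast_nonneg (α := ℝ)]

end LogInterpolation

theorem exists_subseq_realizing_limsup_liminf_general (φ : ℕ → ℝ)
    (C : ℝ) (hC : 1 ≤ C) :
    ∃ nseq : ℕ → ℕ, StrictMono nseq ∧ (∀ i, 1 ≤ nseq i) ∧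
      Filter.limsup (fun i => ENNReal.ofReal (φ (nseq i) / Real.log (nseq i)))
          Filter.atTop
        = Filter.limsup (fun n => ENNReal.ofReal (φ n / Real.log n)) Filter.atTop ∧
      Filter.liminf
          (fun i => ENNReal.ofReal (φ (nseq i + 1) / Real.log ((nseq i + 1 : ℕ))))
          Filter.atTop
        = Filter.liminf (fun n => ENNReal.ofReal (φ n / Real.log n)) Filter.atTop ∧
      Filter.Tendsto (fun i => Real.log (nseq (i + 1)) / Real.log (nseq i))
        Filter.atTop (nhds C) ∧
      Filter.Tendsto (fun i => Real.log (nseq i) / (i : ℝ)) Filter.atTop Filter.atTop := by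
  set u : ℕ → ℝ≥0∞ := fun n => ENNReal.ofReal (φ n / Real.log n)
  obtain ⟨A, hA, hA_top⟩ := exists_seq_tendsto_limsup (u := u) (f := atTop)
  obtain ⟨B, hB, hB_top⟩ := exists_seq_tendsto_liminf (u := u) (f := atTop)
  -- anchors alternate between points where `u` nears its limsup and points just before ones
  -- where it nears its liminf
  obtain ⟨n, I, m, hn, hn₁, hI, hm, hnI, hratio, hgrowth⟩ :=
    LogInterpolation.exists_strictMono_log_ratio_tendsto_through hC
      (fun k => if Even k then A else fun j => B j - 1)
      fun k => by split_ifs; exacts [hA_top, (tendsto_sub_atTop_nat 1).comp hB_top]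
  have hodd : Tendsto (fun k => 2 * k + 1) atTop atTop :=
    tendsto_atTop_mono (fun k => (by omega : k ≤ 2 * k + 1)) tendsto_id
  have hm_even : Tendsto (fun k => m (2 * k)) atTop atTop :=
    tendsto_atTop_mono (fun k => (by omega : k ≤ 2 * k).trans (hm _)) tendsto_id
  have hm_odd : Tendsto (fun k => m (2 * k + 1)) atTop atTop :=
    tendsto_atTop_mono (fun k => (by omega : k ≤ 2 * k + 1).trans (hm _)) tendsto_id
  refine ⟨n, hn, hn₁, ?_, ?_, hratio, hgrowth⟩
  · refine limsup_comp_eq_of_tendsto_comp (u := u) hn.tendsto_atTop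
      (hI.tendsto_atTop.comp hodd) ((hA.comp hm_even).congr fun k => ?_)
    simp [hnI (2 * k)]
  · refine liminf_comp_eq_of_tendsto_comp (u := u) (v := fun i => n i + 1)
      ((tendsto_add_atTop_nat 1).comp hn.tendsto_atTop)
      (hI.tendsto_atTop.comp ((tendsto_add_atTop_nat 1).comp hodd))
      ((hB.comp hm_odd).congr fun k => ?_)
    have h := hnI (2 * k + 1)
    simp only [Nat.not_even_two_mul_add_one, if_false] at h
    show u (B (m (2 * k + 1))) = u (n (I (2 * k + 1 + 1)) + 1)
    have h₁ := hn₁ (I (2 * k + 1 + 1))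
    rw [h, Nat.sub_add_cancel (by omega)]

/-- Construction of a subsequence realizing `limsup φ(n)/log n` along `n_i` and
`liminf φ(n)/log n` along `n_i + 1`, with `log n_{i+1}/log n_i → C` and `log n_i / i → ∞`. -/
theorem exists_subseq_realizing_limsup_liminf (φ : ℕ → ℝ) (hpos : ∀ n, 0 < φ n)
    (C : ℝ) (hC : 1 ≤ C) :
    ∃ nseq : ℕ → ℕ, StrictMono nseq ∧ (∀ i, 1 ≤ nseq i) ∧
      Filter.limsup (fun i => ENNReal.ofReal (φ (nseq i) / Real.log (nseq i)))
          Filter.atTop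
        = Filter.limsup (fun n => ENNReal.ofReal (φ n / Real.log n)) Filter.atTop ∧
      Filter.liminf
          (fun i => ENNReal.ofReal (φ (nseq i + 1) / Real.log ((nseq i + 1 : ℕ))))
          Filter.atTop
        = Filter.liminf (fun n => ENNReal.ofReal (φ n / Real.log n)) Filter.atTop ∧
      Filter.Tendsto (fun i => Real.log (nseq (i + 1)) / Real.log (nseq i))
        Filter.atTop (nhds C) ∧
      Filter.Tendsto (fun i => Real.log (nseq i) / (i : ℝ)) Filter.atTop Filter.atTop :=
  exists_subseq_realizing_limsup_liminf_general φ C hC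

end RecurrenceZeroOne
end

section
/- Let φ: ℕ → ℝ⁺ be a positive monotone increasing function tending to infinity. Then there exists a strictly increasing sequence of positive integers {m_i} with φ(m_{i+1})/φ(m_i+1) → 1 and (log m_{i+1})/(log m_i) → 1, and such that for each i, either m_{i+1} ≥ m_i log m_i or φ(m_{i+1}) − φ(m_i) > 1. -/
open Filter Set Metric
open scoped ENNReal Topology

namespace RecurrenceZeroOne

open Real

/-!
Call `t` a jump point of `φ` if `φ (t + 1) > φ t + 1`. A jump that is large compared with `φ`
must not be straddled, or `φ (m_{i+1}) / φ (m_i + 1)` blows up; so the sequence lands exactly on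
each jump point, and the invariant `AdmitsNextJump` says that the next one can still be reached
by an admissible step. From such an `m`, with `y = ⌈m log m⌉`, one either lands on the next jump
point, if it is at most `y log y` and `φ`-close to `φ (m + 1)`, or takes the first admissible
point after `m`: it is at most `y`, crosses no jump, and keeps the next jump point admissible by
position or by value. Every step therefore has `φ m' ≤ φ (m + 1) + 3` and `m' ≤ 4 m log² m`,
which give the two limits.
-/

theorem exists_seq_of_forall_exists {α : Type*} {p : α → Prop} {r : α → α → Prop} {a : α}
    (ha : p a) (h : ∀ x, p x → ∃ y, p y ∧ r x y) :
    ∃ u : ℕ → α, ∀ i, p (u i) ∧ r (u i) (u (i + 1)) := by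
  choose g hgP hgR using h
  let next : {x // p x} → {x // p x} := fun x => ⟨g x x.2, hgP x x.2⟩
  refine ⟨fun i => (next^[i] ⟨a, ha⟩).1, fun i => ⟨(next^[i] ⟨a, ha⟩).2, ?_⟩⟩
  dsimp only
  rw [Function.iterate_succ_apply']
  exact hgR _ _

theorem tendsto_div_of_le_of_le_add {ι : Type*} {l : Filter ι} {c d : ι → ℝ} {K : ℝ}
    (hd : Tendsto d l atTop) (hlo : ∀ i, d i ≤ c i) (hhi : ∀ i, c i ≤ d i + K) :
    Tendsto (fun i => c i / d i) l (𝓝 1) := by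
  have hupper : Tendsto (fun i => 1 + K / d i) l (𝓝 1) := by
    simpa using tendsto_const_nhds.add (tendsto_const_nhds.div_atTop hd)
  refine tendsto_of_tendsto_of_tendsto_of_le_of_le' tendsto_const_nhds hupper ?_ ?_ <;>
    filter_upwards [hd.eventually_gt_atTop 0] with i hi
  · rw [le_div_iff₀ hi, one_mul]; exact hlo i
  · rw [div_le_iff₀ hi, add_mul, one_mul, div_mul_cancel₀ _ hi.ne']; exact hhi i

theorem tendsto_log_mul_mul_log_sq_div_log {C : ℝ} (hC : 0 < C) :
    Tendsto (fun x => log (C * x * log x ^ 2) / log x) atTop (𝓝 1) := by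
  have hloglog : Tendsto (fun x => log (log x) / log x) atTop (𝓝 0) :=
    isLittleO_log_id_atTop.tendsto_div_nhds_zero.comp tendsto_log_atTop
  have hlim :
      Tendsto (fun x => 1 + (log C / log x + 2 * (log (log x) / log x))) atTop (𝓝 1) := by
    simpa using tendsto_const_nhds.add
      ((tendsto_const_nhds.div_atTop tendsto_log_atTop).add (hloglog.const_mul 2))
  refine hlim.congr' ?_
  filter_upwards [eventually_gt_atTop 1] with x hx
  have hlog : 0 < log x := log_pos hx
  rw [log_mul (by positivity) (by positivity), log_mul hC.ne' (by positivity), log_pow]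
  field_simp
  push_cast
  ring

theorem tendsto_log_div_log_of_le_mul_log_sq {ι : Type*} {l : Filter ι} {a b : ι → ℝ}
    {C : ℝ} (hC : 0 < C) (ha : Tendsto a l atTop) (hab : ∀ i, a i ≤ b i)
    (hb : ∀ i, b i ≤ C * a i * log (a i) ^ 2) :
    Tendsto (fun i => log (b i) / log (a i)) l (𝓝 1) := by
  refine tendsto_of_tendsto_of_tendsto_of_le_of_le' tendsto_const_nhds
    ((tendsto_log_mul_mul_log_sq_div_log hC).comp ha) ?_ ?_ <;>
    filter_upwards [ha.eventually_gt_atTop 1] with i hi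
  · have hlog : 0 < log (a i) := log_pos hi
    rw [le_div_iff₀ hlog, one_mul]
    exact log_le_log (by linarith) (hab i)
  · exact div_le_div_of_nonneg_right (log_le_log (by linarith [hab i]) (hb i)) (log_pos hi).le

section Jumps

variable (φ : ℕ → ℝ)

def JumpsAt (t : ℕ) : Prop := φ t + 1 < φ (t + 1)

def Admissible (m n : ℕ) : Prop := (m : ℝ) * log m ≤ n ∨ 1 < φ n - φ m

def AdmitsNextJump (m : ℕ) : Prop :=
  ∀ t, Minimal (fun t => m < t ∧ JumpsAt φ t) t → Admissible φ m t

variable {φ}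

theorem admitsNextJump_of_jumpsAt (hφ : Monotone φ) {m : ℕ} (hm : JumpsAt φ m) :
    AdmitsNextJump φ m := fun t ht =>
  Or.inr (by have := hφ (Nat.succ_le_of_lt ht.1.1); unfold JumpsAt at hm; linarith)

theorem exists_admitsNextJump (hφ : Monotone φ) (a : ℕ) :
    ∃ m, a ≤ m ∧ AdmitsNextJump φ m := by
  by_cases h : ∃ m, a ≤ m ∧ JumpsAt φ m
  · obtain ⟨m, ham, hm⟩ := h
    exact ⟨m, ham, admitsNextJump_of_jumpsAt hφ hm⟩
  · exact ⟨a, le_rfl, fun t ht => (h ⟨t, ht.1.1.le, ht.1.2⟩).elim⟩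

theorem minimal_jumpsAt_of_le {m v t : ℕ} (hmv : m ≤ v)
    (hno : ∀ r, m < r → r ≤ v → ¬ JumpsAt φ r)
    (ht : Minimal (fun t => v < t ∧ JumpsAt φ t) t) :
    Minimal (fun t => m < t ∧ JumpsAt φ t) t :=
  ⟨⟨hmv.trans_lt ht.1.1, ht.1.2⟩,
    fun s hs hst => ht.2 ⟨lt_of_not_ge fun hsv => hno s hs.1 hsv hs.2, hs.2⟩ hst⟩

noncomputable def logStep (m : ℕ) : ℕ := ⌈(m : ℝ) * log m⌉₊

theorem one_lt_log_natCast {m : ℕ} (hm : 3 ≤ m) : 1 < log m := by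
  have h3 : (3 : ℝ) ≤ m := by exact_mod_cast hm
  rw [lt_log_iff_exp_lt (by positivity)]
  linarith [exp_one_lt_d9]

theorem lt_logStep {m : ℕ} (hm : 3 ≤ m) : m < logStep m := by
  have hlt : (m : ℝ) < m * log m :=
    lt_mul_of_one_lt_right (by positivity) (one_lt_log_natCast hm)
  exact_mod_cast hlt.trans_le (Nat.le_ceil _)

theorem logStep_le_logStep_mul_log {m : ℕ} (hm : 3 ≤ m) :
    (logStep m : ℝ) ≤ logStep m * log (logStep m) :=
  le_mul_of_one_le_right (Nat.cast_nonneg _)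
    (one_lt_log_natCast (hm.trans (lt_logStep hm).le)).le

theorem logStep_mul_log_le {m : ℕ} (hm : 3 ≤ m) :
    (logStep m : ℝ) * log (logStep m) ≤ 4 * m * log m ^ 2 := by
  set L := log m
  have hL : 1 < L := one_lt_log_natCast hm
  have hm0 : (3 : ℝ) ≤ m := by exact_mod_cast hm
  have hy0 : (0 : ℝ) < logStep m := by exact_mod_cast (Nat.zero_le m).trans_lt (lt_logStep hm)
  have hy : (logStep m : ℝ) ≤ 2 * m * L :=
    (Nat.ceil_lt_add_one (by positivity)).le.trans (by nlinarith)
  have hlogy : log (logStep m) ≤ 2 * L := by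
    calc log (logStep m) ≤ log (2 * m * L) := log_le_log hy0 hy
      _ = log 2 + L + log L := by
        rw [log_mul (by positivity) (by positivity), log_mul (by norm_num) (by positivity)]
      _ ≤ 2 * L := by linarith [log_le_sub_one_of_pos (by linarith : 0 < L), log_two_lt_d9]
  calc (logStep m : ℝ) * log (logStep m) ≤ (2 * m * L) * (2 * L) :=
        mul_le_mul hy hlogy (log_natCast_nonneg _) (by positivity)
    _ = 4 * m * L ^ 2 := by ring

theorem exists_minimal_admissible (φ : ℕ → ℝ) {m : ℕ} (hm : 3 ≤ m) :
    ∃ v ≤ logStep m, Minimal (fun n => m < n ∧ Admissible φ m n) v :=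
  exists_minimal_le_of_wellFoundedLT _ _ ⟨lt_logStep hm, Or.inl (Nat.le_ceil _)⟩

theorem le_add_one_of_lt_minimal_admissible {m v k : ℕ}
    (hv : Minimal (fun n => m < n ∧ Admissible φ m n) v) (hmk : m < k) (hkv : k < v) :
    φ k ≤ φ m + 1 := by
  by_contra h
  exact hkv.not_ge (hv.2 ⟨hmk, Or.inr (by linarith)⟩ hkv.le)

theorem exists_next_of_forall_jump_far (hφ : Monotone φ) {m : ℕ} (hm : 3 ≤ m)
    (hfar : ∀ t, Minimal (fun t => m < t ∧ JumpsAt φ t) t → φ t ≤ φ (m + 1) + 3 →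
      (logStep m : ℝ) * log (logStep m) < t) :
    ∃ v ≤ logStep m, m < v ∧ Admissible φ m v ∧ φ v ≤ φ (m + 1) + 2 ∧
      AdmitsNextJump φ v := by
  set y := logStep m
  have hφm : φ m ≤ φ (m + 1) := hφ m.le_succ
  have hy := logStep_le_logStep_mul_log hm
  obtain ⟨v, hvy, hv⟩ := exists_minimal_admissible φ hm
  have hvy' : (v : ℝ) ≤ y := by exact_mod_cast hvy
  have hno : ∀ r, m < r → r < v → ¬ JumpsAt φ r := by
    intro r hmr hrv hr
    obtain ⟨t, htr, ht⟩ :=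
      exists_minimal_le_of_wellFoundedLT (fun t => m < t ∧ JumpsAt φ t) r ⟨hmr, hr⟩
    have htv : (t : ℝ) ≤ v := by exact_mod_cast htr.trans hrv.le
    have := le_add_one_of_lt_minimal_admissible hv ht.1.1 (htr.trans_lt hrv)
    linarith [hfar t ht (by linarith)]
  have hφv : φ v ≤ φ (m + 1) + 2 := by
    rcases (Nat.succ_le_of_lt hv.1.1).eq_or_lt with h | h
    · rw [← h]; linarith
    · have hbelow := le_add_one_of_lt_minimal_admissible hv (k := v - 1) (by omega) (by omega)
      have hstep := hno (v - 1) (by omega) (by omega)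
      rw [JumpsAt, Nat.sub_add_cancel (by omega)] at hstep
      linarith
  refine ⟨v, hvy, hv.1.1, hv.1.2, hφv, ?_⟩
  by_cases hjv : JumpsAt φ v
  · exact admitsNextJump_of_jumpsAt hφ hjv
  intro t ht
  have htm := minimal_jumpsAt_of_le hv.1.1.le
    (fun r hmr hrv => hrv.lt_or_eq.elim (hno r hmr) (· ▸ hjv)) ht
  by_cases htφ : φ t ≤ φ (m + 1) + 3
  · left
    have hv0 : (0 : ℝ) < v := by exact_mod_cast (Nat.zero_le m).trans_lt hv.1.1
    calc (v : ℝ) * log v ≤ y * log y :=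
          mul_le_mul hvy' (log_le_log hv0 hvy') (log_natCast_nonneg v) (Nat.cast_nonneg y)
      _ ≤ t := (hfar t htm htφ).le
  · right; linarith

theorem exists_next_admitsNextJump (hφ : Monotone φ) {m : ℕ} (hm : 3 ≤ m)
    (hgood : AdmitsNextJump φ m) :
    ∃ m', m < m' ∧ Admissible φ m m' ∧ φ m' ≤ φ (m + 1) + 3 ∧
      (m' : ℝ) ≤ 4 * m * log m ^ 2 ∧ AdmitsNextJump φ m' := by
  have hsize := logStep_mul_log_le hm
  by_cases hnear : ∃ t, Minimal (fun t => m < t ∧ JumpsAt φ t) t ∧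
      φ t ≤ φ (m + 1) + 3 ∧ (t : ℝ) ≤ logStep m * log (logStep m)
  · obtain ⟨t, ht, htφ, hty⟩ := hnear
    exact ⟨t, ht.1.1, hgood t ht, htφ, hty.trans hsize, admitsNextJump_of_jumpsAt hφ ht.1.2⟩
  obtain ⟨v, hvy, hmv, hadm, hφv, hgood'⟩ :=
    exists_next_of_forall_jump_far hφ hm fun t ht htφ =>
      lt_of_not_ge fun h => hnear ⟨t, ht, htφ, h⟩
  have hy := logStep_le_logStep_mul_log hm
  have hvy' : (v : ℝ) ≤ logStep m := by exact_mod_cast hvy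
  exact ⟨v, hmv, hadm, by linarith, by linarith, hgood'⟩

end Jumps

theorem exists_subseq_ratio_one_general (φ : ℕ → ℝ)
    (hmono : Monotone φ) (htop : Filter.Tendsto φ Filter.atTop Filter.atTop) :
    ∃ mseq : ℕ → ℕ, StrictMono mseq ∧ (∀ i, 1 ≤ mseq i) ∧
      Filter.Tendsto (fun i => φ (mseq (i + 1)) / φ (mseq i + 1))
        Filter.atTop (nhds 1) ∧
      Filter.Tendsto (fun i => Real.log (mseq (i + 1)) / Real.log (mseq i))
        Filter.atTop (nhds 1) ∧
      ∀ i, (mseq i : ℝ) * Real.log (mseq i) ≤ (mseq (i + 1) : ℝ) ∨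
        1 < φ (mseq (i + 1)) - φ (mseq i) := by
  obtain ⟨m₀, hm₀, hgood₀⟩ := exists_admitsNextJump hmono 3
  obtain ⟨u, hu⟩ := exists_seq_of_forall_exists (p := fun m => 3 ≤ m ∧ AdmitsNextJump φ m)
    (r := fun m m' => m < m' ∧ Admissible φ m m' ∧ φ m' ≤ φ (m + 1) + 3 ∧
      (m' : ℝ) ≤ 4 * m * log m ^ 2)
    ⟨hm₀, hgood₀⟩ fun m ⟨hm, hgood⟩ => by
      obtain ⟨m', hmm', hadm, hφ, hsize, hgood'⟩ := exists_next_admitsNextJump hmono hm hgood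
      exact ⟨m', ⟨by omega, hgood'⟩, hmm', hadm, hφ, hsize⟩
  have hu_mono : StrictMono u := strictMono_nat_of_lt_succ fun i => (hu i).2.1
  have hu_top : Tendsto u atTop atTop := hu_mono.tendsto_atTop
  refine ⟨u, hu_mono, fun i => le_trans (by norm_num) (hu i).1.1, ?_, ?_, fun i => (hu i).2.2.1⟩
  · exact tendsto_div_of_le_of_le_add (htop.comp ((tendsto_add_atTop_nat 1).comp hu_top))
      (fun i => hmono (hu i).2.1) fun i => (hu i).2.2.2.1
  · exact tendsto_log_div_log_of_le_mul_log_sq four_pos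
      (tendsto_natCast_atTop_atTop.comp hu_top) (fun i => by exact_mod_cast (hu i).2.1.le)
      fun i => (hu i).2.2.2.2

/-- For monotone increasing `φ` tending to infinity there is a strictly increasing
sequence `m_i` with `φ(m_{i+1})/φ(m_i+1) → 1`, `log m_{i+1}/log m_i → 1`, and for
each `i` either `m_{i+1} ≥ m_i log m_i` or `φ(m_{i+1}) − φ(m_i) > 1`. -/
theorem exists_subseq_ratio_one (φ : ℕ → ℝ) (hpos : ∀ n, 0 < φ n)
    (hmono : Monotone φ) (htop : Filter.Tendsto φ Filter.atTop Filter.atTop) :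
    ∃ mseq : ℕ → ℕ, StrictMono mseq ∧ (∀ i, 1 ≤ mseq i) ∧
      Filter.Tendsto (fun i => φ (mseq (i + 1)) / φ (mseq i + 1))
        Filter.atTop (nhds 1) ∧
      Filter.Tendsto (fun i => Real.log (mseq (i + 1)) / Real.log (mseq i))
        Filter.atTop (nhds 1) ∧
      ∀ i, (mseq i : ℝ) * Real.log (mseq i) ≤ (mseq (i + 1) : ℝ) ∨
        1 < φ (mseq (i + 1)) - φ (mseq i) :=
  exists_subseq_ratio_one_general φ hmono htop

end RecurrenceZeroOne
end

section
/- Suppose x ∈ Σ satisfies: there exist strictly increasing sequences {n_i}, {ℓ_i} of natural numbers with R_n(x) = ℓ_i for all large n with n_{i-1} < n ≤ n_i, where ℓ_i = ⌈n_i^A log n_i⌉, lim_i (log n_{i+1})/(log n_i) = B/A for some 1 ≤ A ≤ B < ∞, limsup_i φ(n_i)/log n_i = γ and liminf_i φ(n_i+1)/log(n_i+1) = δ with 0 < δ ≤ γ < ∞. Then liminf_n (log R_n(x))/φ(n) = A/γ and limsup_n (log R_n(x))/φ(n) = B/δ. -/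
/-!
On the block `n_i < n ≤ n_{i+1}` the return time is the constant `ℓ_{i+1}`, so `log R_n / φ(n)`
decreases in `n` there: the liminf is the liminf of the values `log ℓ_{i+1} / φ(n_{i+1})` at
the block ends, the limsup the limsup of the values `log ℓ_{i+1} / φ(n_i + 1)` at the block
starts. Since `log ⌈n^A log n⌉ ~ A log n`, dividing numerator and denominator by `log n_{i+1}`,
resp. `log (n_i + 1)`, turns these into quotients of a sequence tending to `A`, resp. to
`A · (B/A) · 1 = B`, by a sequence with limsup `γ`, resp. liminf `δ`.
-/

open Filter Set Metric
open scoped ENNReal Topology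

section Blocks

variable {α : Type*} [CompleteLattice α] {s : ℕ → ℕ}

lemma StrictMono.eventually_exists_block (hs : StrictMono s) (I : ℕ) :
    ∀ᶠ n in atTop, ∃ i, I ≤ i ∧ s i < n ∧ n ≤ s (i + 1) := by
  filter_upwards [eventually_gt_atTop (s I)] with n hn
  have hsI : StrictMono fun k => s (I + k) := hs.comp (strictMono_id.const_add I)
  obtain ⟨k, hk⟩ := hsI.exists_between_of_tendsto_atTop hsI.tendsto_atTop (by simpa using hn)
  exact ⟨I + k, le_add_right le_rfl, hk⟩

lemma limsup_eq_limsup_block_start (hs : StrictMono s) {f : ℕ → α}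
    (h : ∀ᶠ i in atTop, ∀ n, s i < n → n ≤ s (i + 1) → f n ≤ f (s i + 1)) :
    limsup f atTop = limsup (fun i => f (s i + 1)) atTop := by
  refine le_antisymm ?_ ((tendsto_add_atTop_nat 1).comp hs.tendsto_atTop).limsup_comp_le_limsup
  rw [limsup_eq, limsup_eq]
  refine sInf_le_sInf fun b hb => ?_
  obtain ⟨I, hI⟩ := eventually_atTop.1 (hb.and h)
  filter_upwards [hs.eventually_exists_block I] with n ⟨i, hIi, hin, hni⟩
  exact ((hI i hIi).2 n hin hni).trans (hI i hIi).1

lemma liminf_eq_liminf_block_end (hs : StrictMono s) {f : ℕ → α}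
    (h : ∀ᶠ i in atTop, ∀ n, s i < n → n ≤ s (i + 1) → f (s (i + 1)) ≤ f n) :
    liminf f atTop = liminf (fun i => f (s (i + 1))) atTop := by
  refine le_antisymm (hs.tendsto_atTop.comp (tendsto_add_atTop_nat 1)).liminf_le_liminf_comp ?_
  rw [liminf_eq, liminf_eq]
  refine sSup_le_sSup fun b hb => ?_
  obtain ⟨I, hI⟩ := eventually_atTop.1 (hb.and h)
  filter_upwards [hs.eventually_exists_block I] with n ⟨i, hIi, hin, hni⟩
  exact (hI i hIi).1.trans ((hI i hIi).2 n hin hni)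

end Blocks

namespace ENNReal

variable {ι : Type*} {l : Filter ι} [l.NeBot] {u v : ι → ℝ≥0∞} {a : ℝ≥0∞}

lemma limsup_div_of_tendsto (hu : Tendsto u l (𝓝 a)) (ha₀ : a ≠ 0) (ha : a ≠ ∞) :
    limsup (fun i => u i / v i) l = a / liminf v l := by
  have hsup : limsup u l = a := hu.limsup_eq
  have hdiv : (fun i => u i / v i) = (fun i => (v i)⁻¹) * u := by
    ext i; simp [div_eq_mul_inv, mul_comm]
  rw [hdiv, div_eq_mul_inv, inv_liminf, mul_comm a]
  refine le_antisymm ?_ ?_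
  · have := limsup_mul_le' (u := fun i => (v i)⁻¹) (Or.inr (hsup ▸ ha)) (Or.inr (hsup ▸ ha₀))
    rwa [hsup] at this
  · simpa only [hu.liminf_eq] using le_limsup_mul (u := fun i => (v i)⁻¹) (v := u) (f := l)

lemma liminf_div_of_tendsto (hu : Tendsto u l (𝓝 a)) (ha₀ : a ≠ 0) (ha : a ≠ ∞) :
    liminf (fun i => u i / v i) l = a / limsup v l := by
  have hsup : limsup u l = a := hu.limsup_eq
  have hdiv : (fun i => u i / v i) = u * fun i => (v i)⁻¹ := by
    ext i; simp [div_eq_mul_inv]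
  rw [hdiv, div_eq_mul_inv, inv_limsup]
  refine le_antisymm ?_ ?_
  · have := liminf_mul_le (v := fun i => (v i)⁻¹) (Or.inl (hsup ▸ ha₀)) (Or.inl (hsup ▸ ha))
    rwa [hsup] at this
  · simpa only [hu.liminf_eq] using le_liminf_mul (u := u) (v := fun i => (v i)⁻¹) (f := l)

section OfReal

variable {f g : ι → ℝ} {c d : ℝ}

lemma liminf_ofReal_div_of_tendsto (hc : 0 < c) (hd : 0 < d) (hf : Tendsto f l (𝓝 c))
    (hg : ∀ᶠ i in l, 0 < g i) (hgd : limsup g l = d) :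
    liminf (fun i => ENNReal.ofReal (f i / g i)) l = ENNReal.ofReal (c / d) := by
  have hbdd : IsBoundedUnder (· ≤ ·) l g := by
    by_contra h
    exact hd.ne' (hgd ▸ Real.limsup_of_not_isBoundedUnder h)
  have hcobdd : IsCoboundedUnder (· ≤ ·) l g :=
    .of_frequently_ge (hg.frequently.mono fun _ h => h.le)
  calc liminf (fun i => ENNReal.ofReal (f i / g i)) l
      = liminf (fun i => ENNReal.ofReal (f i) / ENNReal.ofReal (g i)) l :=
        liminf_congr (hg.mono fun i hi => ofReal_div_of_pos hi)
    _ = ENNReal.ofReal c / ENNReal.ofReal d := by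
        rw [liminf_div_of_tendsto (tendsto_ofReal hf) (by simpa) ofReal_ne_top, ← hgd,
          ofReal_limsup hcobdd hbdd]
    _ = ENNReal.ofReal (c / d) := (ofReal_div_of_pos hd).symm

lemma limsup_ofReal_div_of_tendsto (hc : 0 < c) (hd : 0 < d) (hf : Tendsto f l (𝓝 c))
    (hg : ∀ᶠ i in l, 0 < g i) (hgd : liminf g l = d) :
    limsup (fun i => ENNReal.ofReal (f i / g i)) l = ENNReal.ofReal (c / d) := by
  have hcobdd : IsCoboundedUnder (· ≥ ·) l g := by
    by_contra h
    exact hd.ne' (hgd ▸ Real.liminf_of_not_isCoboundedUnder h)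
  have hbdd : IsBoundedUnder (· ≥ ·) l g :=
    isBoundedUnder_of_eventually_ge (hg.mono fun _ h => h.le)
  calc limsup (fun i => ENNReal.ofReal (f i / g i)) l
      = limsup (fun i => ENNReal.ofReal (f i) / ENNReal.ofReal (g i)) l :=
        limsup_congr (hg.mono fun i hi => ofReal_div_of_pos hi)
    _ = ENNReal.ofReal c / ENNReal.ofReal d := by
        rw [limsup_div_of_tendsto (tendsto_ofReal hf) (by simpa) ofReal_ne_top, ← hgd,
          ofReal_mono.map_liminf_of_continuousAt g continuous_ofReal.continuousAt hcobdd hbdd]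
        rfl
    _ = ENNReal.ofReal (c / d) := (ofReal_div_of_pos hd).symm

end OfReal

end ENNReal

namespace Real

lemma tendsto_log_natCeil_rpow_mul_log_div_log {A : ℝ} (hA : 0 ≤ A) :
    Tendsto (fun t : ℝ => log ⌈t ^ A * log t⌉₊ / log t) atTop (𝓝 A) := by
  set g : ℝ → ℝ := fun t => t ^ A * log t
  have hg : Tendsto g atTop atTop := by
    refine tendsto_atTop_mono' atTop ?_ tendsto_log_atTop
    filter_upwards [eventually_ge_atTop 1] with t ht
    exact le_mul_of_one_le_left (log_nonneg ht) (one_le_rpow ht hA)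
  have hceil : Tendsto (fun t => log (⌈g t⌉₊ / g t)) atTop (𝓝 0) := by
    simpa using (tendsto_nat_ceil_div_atTop.comp hg).log one_ne_zero
  have hloglog : Tendsto (fun t => log (log t) / log t) atTop (𝓝 0) :=
    isLittleO_log_id_atTop.tendsto_div_nhds_zero.comp tendsto_log_atTop
  have hsum := (hceil.div_atTop tendsto_log_atTop).add (hloglog.const_add A)
  rw [zero_add, add_zero] at hsum
  refine hsum.congr' ?_
  filter_upwards [eventually_gt_atTop 1, hg.eventually_gt_atTop 0] with t ht hgt
  have hlog : 0 < log t := log_pos ht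
  have hceil_pos : (0 : ℝ) < ⌈g t⌉₊ := by simpa using hgt
  simp only [g] at hgt hceil_pos ⊢
  rw [log_div hceil_pos.ne' hgt.ne', log_mul (by positivity) hlog.ne', log_rpow (by linarith)]
  field_simp
  ring

lemma tendsto_log_nat_add_one_div_log :
    Tendsto (fun n : ℕ => log ((n + 1 : ℕ)) / log n) atTop (𝓝 1) := by
  have h := (tendsto_log_nat_add_one_sub_log.div_atTop
    (tendsto_log_atTop.comp tendsto_natCast_atTop_atTop)).const_add 1
  rw [add_zero] at h
  refine h.congr' ?_
  filter_upwards [eventually_gt_atTop 1] with n hn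
  have : 0 < log n := log_pos (by exact_mod_cast hn)
  push_cast
  simp only [Function.comp_apply]
  field_simp
  ring

end Real

lemma tendsto_log_div_log_nat_add_one {p L : ℕ → ℕ} (hp : Tendsto p atTop atTop) {A B : ℝ}
    (hA : A ≠ 0) (hL : Tendsto (fun i => Real.log (L i) / Real.log (p i)) atTop (𝓝 A))
    (hBA : Tendsto (fun i => Real.log (p (i + 1)) / Real.log (p i)) atTop (𝓝 (B / A))) :
    Tendsto (fun i => Real.log (L (i + 1)) / Real.log ((p i + 1 : ℕ))) atTop (𝓝 B) := by
  have hprod := ((hL.comp (tendsto_add_atTop_nat 1)).mul hBA).div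
    (Real.tendsto_log_nat_add_one_div_log.comp hp) one_ne_zero
  rw [show A * (B / A) / 1 = B by field_simp] at hprod
  have hp₂ := hp.eventually_ge_atTop 2
  refine hprod.congr' ?_
  filter_upwards [hp₂, (tendsto_add_atTop_nat 1).eventually hp₂] with i hi hi'
  have hlog : ∀ {k : ℕ}, 2 ≤ k → Real.log k ≠ 0 := fun hk =>
    (Real.log_pos (by exact_mod_cast hk)).ne'
  have hpi := hlog hi
  have hpi' := hlog hi'
  have hpi₁ := hlog (hi.trans (Nat.le_succ _))
  simp only [Function.comp_apply, Pi.div_apply]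
  field_simp

namespace RecurrenceZeroOne

variable {m : ℕ} {φ : ℕ → ℝ} {x : ℕ → Fin m} {nseq ℓseq : ℕ → ℕ}

lemma ratio_eq_ofReal_of_R_eq {n L : ℕ} (hφ : 0 < φ n) (hR : R m n x = L) :
    ratio m φ x n = ENNReal.ofReal (Real.log L / φ n) := by
  rw [ratio, elog, hR, if_neg (ENat.natCast_ne_top L), ENat.toNat_natCast,
    ENNReal.ofReal_div_of_pos hφ]

lemma ratio_le_ratio_of_R_eq (hφ : Monotone φ) {a b : ℕ} {L : ℕ∞} (ha : R m a x = L)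
    (hb : R m b x = L) (hab : a ≤ b) : ratio m φ x b ≤ ratio m φ x a := by
  rw [ratio, ratio, ha, hb]
  exact ENNReal.div_le_div_left (ENNReal.ofReal_le_ofReal (hφ hab)) _

lemma eventually_R_eq_on_block (hns : StrictMono nseq) (hx : x ∈ ASet m nseq ℓseq) :
    ∀ᶠ i in atTop, ∀ n, nseq i < n → n ≤ nseq (i + 1) → R m n x = ℓseq (i + 1) := by
  obtain ⟨N, hN⟩ := eventually_atTop.1 hx
  filter_upwards [hns.tendsto_atTop.eventually_ge_atTop N] with i hi n hin hni
  exact hN n (by omega) i hin hni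

lemma limsup_ratio_eq (hφ : ∀ n, 0 < φ n) (hφm : Monotone φ) (hns : StrictMono nseq)
    (hx : x ∈ ASet m nseq ℓseq) :
    limsup (ratio m φ x) atTop =
      limsup (fun i => ENNReal.ofReal (Real.log (ℓseq (i + 1)) / φ (nseq i + 1))) atTop := by
  have hR := eventually_R_eq_on_block hns hx
  have hstart : ∀ᶠ i in atTop, R m (nseq i + 1) x = ℓseq (i + 1) :=
    hR.mono fun i hi => hi _ (Nat.lt_succ_self _) (hns (Nat.lt_succ_self i))
  rw [limsup_eq_limsup_block_start hns ((hR.and hstart).mono fun i hi n hin hni =>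
    ratio_le_ratio_of_R_eq hφm hi.2 (hi.1 n hin hni) hin)]
  exact limsup_congr (hstart.mono fun i hi => ratio_eq_ofReal_of_R_eq (hφ _) hi)

lemma liminf_ratio_eq (hφ : ∀ n, 0 < φ n) (hφm : Monotone φ) (hns : StrictMono nseq)
    (hx : x ∈ ASet m nseq ℓseq) :
    liminf (ratio m φ x) atTop =
      liminf (fun i => ENNReal.ofReal (Real.log (ℓseq (i + 1)) / φ (nseq (i + 1)))) atTop := by
  have hR := eventually_R_eq_on_block hns hx
  have hend : ∀ᶠ i in atTop, R m (nseq (i + 1)) x = ℓseq (i + 1) :=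
    hR.mono fun i hi => hi _ (hns (Nat.lt_succ_self i)) le_rfl
  rw [liminf_eq_liminf_block_end hns ((hR.and hend).mono fun i hi n hin hni =>
    ratio_le_ratio_of_R_eq hφm (hi.1 n hin hni) hi.2 hni)]
  exact liminf_congr (hend.mono fun i hi => ratio_eq_ofReal_of_R_eq (hφ _) hi)

theorem recurrence_exponents_of_special_blocks_general (m : ℕ) (φ : ℕ → ℝ)
    (hpos : ∀ n, 0 < φ n) (hmono : Monotone φ)
    (A B γ δ : ℝ) (hA : 1 ≤ A) (hAB : A ≤ B) (hδ : 0 < δ) (hδγ : δ ≤ γ)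
    (nseq ℓseq : ℕ → ℕ) (hns : StrictMono nseq)
    (hℓ : ∀ i, ℓseq i = ⌈(nseq i : ℝ) ^ A * Real.log (nseq i)⌉₊)
    (hBA : Filter.Tendsto (fun i => Real.log (nseq (i + 1)) / Real.log (nseq i))
      Filter.atTop (nhds (B / A)))
    (hγ : Filter.limsup (fun i => φ (nseq i) / Real.log (nseq i)) Filter.atTop = γ)
    (hδ' : Filter.liminf
      (fun i => φ (nseq i + 1) / Real.log ((nseq i + 1 : ℕ))) Filter.atTop = δ)
    (x : ℕ → Fin m)
    (hx : ∀ᶠ n in Filter.atTop, ∀ i, nseq i < n → n ≤ nseq (i + 1) →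
      R m n x = (ℓseq (i + 1) : ℕ∞)) :
    Filter.liminf (fun n => ratio m φ x n) Filter.atTop = ENNReal.ofReal (A / γ) ∧
    Filter.limsup (fun n => ratio m φ x n) Filter.atTop = ENNReal.ofReal (B / δ) := by
  have hA₀ : 0 < A := one_pos.trans_le hA
  have hn : Tendsto nseq atTop atTop := hns.tendsto_atTop
  have hlog : ∀ᶠ i in atTop, 0 < Real.log (nseq i) :=
    (Real.tendsto_log_atTop.comp (tendsto_natCast_atTop_atTop.comp hn)).eventually_gt_atTop 0
  have hlogℓ : Tendsto (fun i => Real.log (ℓseq i) / Real.log (nseq i)) atTop (𝓝 A) :=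
    ((Real.tendsto_log_natCeil_rpow_mul_log_div_log hA₀.le).comp
      (tendsto_natCast_atTop_atTop.comp hn)).congr fun i => by simp only [Function.comp_apply, hℓ]
  constructor
  · have hlog₁ := (tendsto_add_atTop_nat 1).eventually hlog
    have hγ₁ : limsup (fun i => φ (nseq (i + 1)) / Real.log (nseq (i + 1))) atTop = γ :=
      (limsup_nat_add (fun i => φ (nseq i) / Real.log (nseq i)) 1).trans hγ
    rw [liminf_ratio_eq hpos hmono hns hx, ← ENNReal.liminf_ofReal_div_of_tendsto hA₀
      (hδ.trans_le hδγ) (hlogℓ.comp (tendsto_add_atTop_nat 1))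
      (hlog₁.mono fun i hi => div_pos (hpos _) hi) hγ₁]
    refine liminf_congr (hlog₁.mono fun i hi => ?_)
    rw [Function.comp_apply, div_div_div_cancel_right₀ hi.ne']
  · have hlog' : ∀ᶠ i in atTop, 0 < Real.log ((nseq i + 1 : ℕ)) :=
      (Real.tendsto_log_atTop.comp (tendsto_natCast_atTop_atTop.comp
        ((tendsto_add_atTop_nat 1).comp hn))).eventually_gt_atTop 0
    rw [limsup_ratio_eq hpos hmono hns hx, ← ENNReal.limsup_ofReal_div_of_tendsto
      (hA₀.trans_le hAB) hδ (tendsto_log_div_log_nat_add_one hn hA₀.ne' hlogℓ hBA)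
      (hlog'.mono fun i hi => div_pos (hpos _) hi) hδ']
    refine limsup_congr (hlog'.mono fun i hi => ?_)
    rw [div_div_div_cancel_right₀ hi.ne']

/-- Computation of the recurrence exponents for points of the Cantor-type set with
`ℓ_i = ⌈n_i^A log n_i⌉`: the liminf is `A/γ` and the limsup is `B/δ`. -/
theorem recurrence_exponents_of_special_blocks (m : ℕ) (hm : 2 ≤ m) (φ : ℕ → ℝ)
    (hpos : ∀ n, 0 < φ n) (hmono : Monotone φ)
    (A B γ δ : ℝ) (hA : 1 ≤ A) (hAB : A ≤ B) (hδ : 0 < δ) (hδγ : δ ≤ γ)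
    (nseq ℓseq : ℕ → ℕ) (hns : StrictMono nseq) (hls : StrictMono ℓseq)
    (hn1 : ∀ i, 1 ≤ nseq i)
    (hℓ : ∀ i, ℓseq i = ⌈(nseq i : ℝ) ^ A * Real.log (nseq i)⌉₊)
    (hBA : Filter.Tendsto (fun i => Real.log (nseq (i + 1)) / Real.log (nseq i))
      Filter.atTop (nhds (B / A)))
    (hγ : Filter.limsup (fun i => φ (nseq i) / Real.log (nseq i)) Filter.atTop = γ)
    (hδ' : Filter.liminf
      (fun i => φ (nseq i + 1) / Real.log ((nseq i + 1 : ℕ))) Filter.atTop = δ)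
    (x : ℕ → Fin m)
    (hx : ∀ᶠ n in Filter.atTop, ∀ i, nseq i < n → n ≤ nseq (i + 1) →
      R m n x = (ℓseq (i + 1) : ℕ∞)) :
    Filter.liminf (fun n => ratio m φ x n) Filter.atTop = ENNReal.ofReal (A / γ) ∧
    Filter.limsup (fun n => ratio m φ x n) Filter.atTop = ENNReal.ofReal (B / δ) :=
  recurrence_exponents_of_special_blocks_general m φ hpos hmono A B γ δ hA hAB hδ hδγ nseq ℓseq hns
    hℓ hBA hγ hδ' x hx

end RecurrenceZeroOne
end
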